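/- arXiv:1209.3345 — 5 statements merged into one kernel-verified Lean document; each statement's English description precedes it below -/
import Mathlib

section
/- Let N(q;d) denote the number of monic irreducible polynomials of degree d over F_q with nonzero constant term. Then in the formal power series ring over ℚ (or ℤ), the identity ∏_{d ≥ 1} (1 + u^d)^{-N(q;d)} = (1+u)(1-qu)/(1-qu^2) holds. -/
/-!
Let `M m` be the number of monic polynomials of degree `m` with nonzero constant term and
`S(u) = ∑ M m u^m`. Monic polynomials of degree `m + 1` with zero constant term are `X` times a
monic polynomial of degree `m`, so `M (m + 1) = q^(m+1) - q^m` and `S(u) (1 - qu) = 1 - u`.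
Unique factorisation into monic irreducibles, which have nonzero constant term exactly when their
product does, gives the Euler product `S(u) ∏_d (1 - u^d)^{N d} = 1`. Since
`(1 + u^d)(1 - u^d) = 1 - u^{2d}`, the product `∏_d (1 + u^d)^{N d}` is
`S(u) / S(u²) = (1 - qu²) / ((1 + u)(1 - qu))`. For the coefficient of `u^n` everything can be
computed modulo `u^(n+1)`, where only the factors with `d ≤ n` matter.
-/

open PowerSeries
open scoped Polynomial

namespace Polynomial

section FiniteRing

variable {R : Type*} [CommRing R]

theorem finite_setOf_natDegree_le [Finite R] (n : ℕ) : {p : R[X] | p.natDegree ≤ n}.Finite := by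
  refine Set.Finite.of_injOn (f := fun p (i : Fin (n + 1)) => p.coeff i) (Set.mapsTo_univ _ _)
    (fun p hp q hq hpq => ext fun k => ?_) Set.finite_univ
  by_cases hk : k ≤ n
  · exact congrFun hpq ⟨k, Nat.lt_succ_of_le hk⟩
  · rw [coeff_eq_zero_of_natDegree_lt (lt_of_le_of_lt hp (by omega)),
      coeff_eq_zero_of_natDegree_lt (lt_of_le_of_lt hq (by omega))]

theorem ncard_monic_natDegree_eq [Fintype R] [Nontrivial R] (m : ℕ) :
    {p : R[X] | p.Monic ∧ p.natDegree = m}.ncard = Fintype.card R ^ m := by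
  rw [← Nat.card_coe_set_eq]
  exact (Nat.card_congr ((monicEquivDegreeLT m).trans (degreeLTEquiv R m).toEquiv)).trans
    (by simp)

end FiniteRing

section Field

open UniqueFactorizationMonoid

variable {K : Type*} [Field K]

theorem image_X_mul_monic_natDegree_eq (m : ℕ) :
    (Polynomial.X * ·) '' {g : K[X] | g.Monic ∧ g.natDegree = m} =
      {f | f.Monic ∧ f.natDegree = m + 1 ∧ f.coeff 0 = 0} := by
  ext f
  constructor
  · rintro ⟨g, ⟨hg, rfl⟩, rfl⟩
    refine ⟨monic_X.mul hg, ?_, by simp⟩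
    rw [natDegree_mul X_ne_zero hg.ne_zero, natDegree_X, add_comm]
  · rintro ⟨hf, hd, hc⟩
    obtain ⟨g, rfl⟩ := X_dvd_iff.mpr hc
    have hg : g.Monic := monic_X.of_mul_monic_left hf
    refine ⟨g, ⟨hg, ?_⟩, rfl⟩
    rw [natDegree_mul X_ne_zero hg.ne_zero, natDegree_X] at hd
    omega

variable (S : Finset K[X])

theorem natDegree_prod_pow (hS : ∀ p ∈ S, p.Monic ∧ Irreducible p) (e : S → ℕ) :
    (∏ p : S, (p : K[X]) ^ e p).natDegree = ∑ p : S, e p * (p : K[X]).natDegree := by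
  rw [natDegree_prod_of_monic _ _ fun (p : S) _ => (hS p p.2).1.pow (e p)]
  exact Finset.sum_congr rfl fun p _ => (hS p p.2).1.natDegree_pow (e p)

variable [DecidableEq K]

theorem normalizedFactors_prod_pow (hS : ∀ p ∈ S, p.Monic ∧ Irreducible p) (e : S → ℕ) :
    normalizedFactors (∏ p : S, (p : K[X]) ^ e p) =
      ∑ p : S, Multiset.replicate (e p) (p : K[X]) := by
  rw [Finset.prod_eq_multiset_prod, normalizedFactors_multiset_prod,
    Multiset.map_map, Finset.sum_eq_multiset_sum]
  · congr 1
    refine Multiset.map_congr rfl fun p _ => ?_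
    simp only [Function.comp_apply, (hS p p.2).2.normalizedFactors_pow,
      (hS p p.2).1.normalize_eq_self]
  · simp only [Multiset.mem_map, not_exists, not_and]
    exact fun p _ h => pow_ne_zero _ (hS p p.2).1.ne_zero h

theorem count_normalizedFactors_prod_pow (hS : ∀ p ∈ S, p.Monic ∧ Irreducible p) (e : S → ℕ)
    (p : S) : (normalizedFactors
      (∏ q : S, (q : K[X]) ^ e q)).count (p : K[X]) = e p := by
  rw [normalizedFactors_prod_pow S hS, Multiset.count_sum']
  simp [Multiset.count_replicate]

theorem prod_pow_injective (hS : ∀ p ∈ S, p.Monic ∧ Irreducible p) :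
    Function.Injective fun e : S → ℕ => ∏ p : S, (p : K[X]) ^ e p := fun e₁ e₂ h =>
  _root_.funext fun p => by
    rw [← count_normalizedFactors_prod_pow S hS e₁, ← count_normalizedFactors_prod_pow S hS e₂]
    exact congrArg (fun f => (normalizedFactors f).count (p : K[X])) h

theorem prod_pow_count_normalizedFactors (hS : ∀ p ∈ S, p.Monic ∧ Irreducible p) {f : K[X]}
    (hf : f.Monic) (hfS : ∀ p ∈ normalizedFactors f, p ∈ S) :
    ∏ p : S, (p : K[X]) ^ (normalizedFactors f).count (p : K[X]) = f := by
  rw [Finset.prod_coe_sort S fun p => p ^ (normalizedFactors f).count p,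
    ← Finset.prod_multiset_count_of_subset _ _ fun p hp => hfS p (Multiset.mem_toFinset.mp hp)]
  have hprod : (normalizedFactors f).prod.Monic := by
    simpa using monic_multiset_prod_of_monic _ id fun p hp => (hS p (hfS p hp)).1
  exact eq_of_monic_of_associated hprod hf (prod_normalizedFactors hf.ne_zero)

theorem image_prod_pow (hS : ∀ p ∈ S, p.Monic ∧ Irreducible p) {n k : ℕ} (hk : k ≤ n) :
    (fun e : S → ℕ => ∏ p : S, (p : K[X]) ^ e p) ''
        ↑{e ∈ Fintype.piFinset fun _ : S => Finset.range (n + 1) |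
          ∑ p : S, e p * (p : K[X]).natDegree = k} =
      {f | f.Monic ∧ f.natDegree = k ∧ ∀ p ∈ normalizedFactors f, p ∈ S} := by
  ext f
  simp only [Finset.coe_filter, Fintype.mem_piFinset, Finset.mem_range, Set.mem_image,
    Set.mem_ofPred_eq]
  constructor
  · rintro ⟨e, ⟨-, he⟩, rfl⟩
    refine ⟨monic_prod_of_monic _ _ fun p _ => (hS p p.2).1.pow _,
      (natDegree_prod_pow S hS e).trans he, fun p hp => ?_⟩
    rw [normalizedFactors_prod_pow S hS] at hp
    obtain ⟨q, -, hq⟩ := Multiset.mem_sum.mp hp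
    exact Multiset.eq_of_mem_replicate hq ▸ q.2
  · rintro ⟨hf, rfl, hfS⟩
    have hdeg : ∑ p : S, (normalizedFactors f).count (p : K[X]) * (p : K[X]).natDegree =
        f.natDegree := by
      conv_rhs => rw [← prod_pow_count_normalizedFactors S hS hf hfS]
      rw [natDegree_prod_pow S hS]
    refine ⟨fun p => (normalizedFactors f).count (p : K[X]), ⟨fun p => ?_, hdeg⟩,
      prod_pow_count_normalizedFactors S hS hf hfS⟩
    calc (normalizedFactors f).count (p : K[X])
        ≤ (normalizedFactors f).count (p : K[X]) * (p : K[X]).natDegree :=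
          Nat.le_mul_of_pos_right _ (hS p p.2).2.natDegree_pos
      _ ≤ f.natDegree := hdeg ▸ Finset.single_le_sum
          (f := fun q : S => (normalizedFactors f).count (q : K[X]) * (q : K[X]).natDegree)
          (fun q _ => Nat.zero_le _) (Finset.mem_univ p)
      _ < n + 1 := Nat.lt_succ_of_le hk

end Field

end Polynomial

theorem dvd_prod_one_sub_sub_one {ι R : Type*} [CommRing R] {x : R} {s : Finset ι} {f : ι → R}
    (h : ∀ i ∈ s, x ∣ f i) : x ∣ ∏ i ∈ s, (1 - f i) - 1 := by
  rw [← Ideal.mem_span_singleton, ← Ideal.Quotient.eq, map_prod, map_one]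
  exact Finset.prod_eq_one fun i hi => by
    rw [map_sub, map_one, (Ideal.Quotient.eq_zero_iff_dvd x (f i)).mpr (h i hi), sub_zero]

namespace PowerSeries

section

open UniqueFactorizationMonoid

variable {K : Type*} [Field K] [DecidableEq K] (S : Finset K[X])

theorem coeff_prod_geom_sum (hS : ∀ p ∈ S, p.Monic ∧ Irreducible p) {R : Type*} [CommSemiring R]
    {n k : ℕ} (hk : k ≤ n) :
    coeff k (∏ p : S, ∑ j ∈ Finset.range (n + 1), ((X : R⟦X⟧) ^ (p : K[X]).natDegree) ^ j) =
      {f : K[X] | f.Monic ∧ f.natDegree = k ∧ ∀ p ∈ normalizedFactors f, p ∈ S}.ncard := by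
  rw [← Polynomial.image_prod_pow S hS hk,
    Set.ncard_image_of_injective _ (Polynomial.prod_pow_injective S hS), Set.ncard_coe_finset,
    Finset.prod_univ_sum]
  simp_rw [← pow_mul, Finset.prod_pow_eq_pow_sum, map_sum, coeff_X_pow, mul_comm _ (_ : ℕ)]
  rw [Finset.sum_boole]
  simp_rw [eq_comm]

end

theorem X_pow_dvd_expand_sub {R : Type*} [CommRing R] {p : ℕ} (hp : p ≠ 0) {n : ℕ}
    {φ ψ : R⟦X⟧} (h : X ^ n ∣ φ - ψ) : X ^ n ∣ expand p hp φ - expand p hp ψ := by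
  have h' := map_dvd (expand p hp) h
  rw [map_sub, map_pow, expand_X] at h'
  exact (pow_dvd_pow_of_dvd (dvd_pow_self X hp) n).trans h'

theorem prod_one_add_pow_mul_prod_one_sub_pow {R : Type*} [CommRing R] (s : Finset ℕ)
    (m : ℕ → ℕ) :
    (∏ d ∈ s, (1 + X ^ d : R⟦X⟧) ^ m d) * ∏ d ∈ s, (1 - X ^ d : R⟦X⟧) ^ m d =
      expand 2 two_ne_zero (∏ d ∈ s, (1 - X ^ d : R⟦X⟧) ^ m d) := by
  simp only [map_prod, map_pow, map_sub, map_one, expand_X, ← Finset.prod_mul_distrib, ← mul_pow]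
  exact Finset.prod_congr rfl fun d _ => by ring

end PowerSeries

section FiniteField

open UniqueFactorizationMonoid Finset

variable (F : Type*) [Field F]

def monicNonzeroConst (m : ℕ) : Set F[X] :=
  {f | f.Monic ∧ f.natDegree = m ∧ f.coeff 0 ≠ 0}

def monicIrreducibleNonzeroConst (d : ℕ) : Set F[X] :=
  {p | p.Monic ∧ Irreducible p ∧ p.natDegree = d ∧ p.coeff 0 ≠ 0}

theorem monicNonzeroConst_zero : monicNonzeroConst F 0 = {1} := by
  ext f
  constructor
  · rintro ⟨hf, hd, -⟩
    exact hf.natDegree_eq_zero.mp hd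
  · rintro rfl
    exact ⟨Polynomial.monic_one, Polynomial.natDegree_one, by simp⟩

theorem monicNonzeroConst_succ (m : ℕ) :
    monicNonzeroConst F (m + 1) = {f : F[X] | f.Monic ∧ f.natDegree = m + 1} \
      (Polynomial.X * ·) '' {g | g.Monic ∧ g.natDegree = m} := by
  rw [Polynomial.image_X_mul_monic_natDegree_eq]
  ext f
  simp only [monicNonzeroConst, Set.mem_sdiff, Set.mem_ofPred_eq]
  tauto

theorem ncard_monicNonzeroConst_succ [Fintype F] (m : ℕ) :
    (monicNonzeroConst F (m + 1)).ncard + Fintype.card F ^ m = Fintype.card F ^ (m + 1) := by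
  have hsub : (Polynomial.X * ·) '' {g : F[X] | g.Monic ∧ g.natDegree = m} ⊆
      {f | f.Monic ∧ f.natDegree = m + 1} := by
    rw [Polynomial.image_X_mul_monic_natDegree_eq]
    exact fun f hf => ⟨hf.1, hf.2.1⟩
  rw [monicNonzeroConst_succ, ← Polynomial.ncard_monic_natDegree_eq m,
    ← Polynomial.ncard_monic_natDegree_eq (m + 1),
    ← Set.ncard_image_of_injective {g : F[X] | g.Monic ∧ g.natDegree = m}
      (mul_right_injective₀ Polynomial.X_ne_zero)]
  exact Set.ncard_sdiff_add_ncard_of_subset hsub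
    ((Polynomial.finite_setOf_natDegree_le (m + 1)).subset fun f hf => hf.2.le)

noncomputable def monicIrreducibleNonzeroConstLE [Fintype F] (n : ℕ) : Finset F[X] :=
  ((Polynomial.finite_setOf_natDegree_le n).subset fun _ hp => hp.2.2.2 :
    {p : F[X] | p.Monic ∧ Irreducible p ∧ p.coeff 0 ≠ 0 ∧ p.natDegree ≤ n}.Finite).toFinset

variable {F} [Fintype F]

theorem mem_monicIrreducibleNonzeroConstLE {n : ℕ} {p : F[X]} :
    p ∈ monicIrreducibleNonzeroConstLE F n ↔
      p.Monic ∧ Irreducible p ∧ p.coeff 0 ≠ 0 ∧ p.natDegree ≤ n :=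
  Set.Finite.mem_toFinset _

theorem forall_mem_normalizedFactors_iff [DecidableEq F] {n : ℕ} {f : F[X]} (hf : f.Monic)
    (hn : f.natDegree ≤ n) :
    (∀ p ∈ normalizedFactors f, p ∈ monicIrreducibleNonzeroConstLE F n) ↔ f.coeff 0 ≠ 0 := by
  simp only [mem_monicIrreducibleNonzeroConstLE]
  constructor
  · intro hfS hf0
    obtain ⟨p, hp, hXp⟩ := exists_mem_normalizedFactors_of_dvd hf.ne_zero
      Polynomial.irreducible_X (Polynomial.X_dvd_iff.mpr hf0)
    obtain ⟨hpm, -, hp0, -⟩ := hfS p hp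
    rw [← Polynomial.eq_of_monic_of_associated Polynomial.monic_X hpm hXp] at hp0
    exact hp0 Polynomial.coeff_X_zero
  · intro hf0 p hp
    have hirr := irreducible_of_normalized_factor p hp
    have hpf := dvd_of_mem_normalizedFactors hp
    refine ⟨normalize_normalized_factor p hp ▸ Polynomial.monic_normalize hirr.ne_zero, hirr,
      fun hp0 => hf0 ?_, (Polynomial.natDegree_le_of_dvd hpf hf.ne_zero).trans hn⟩
    exact Polynomial.X_dvd_iff.mp ((Polynomial.X_dvd_iff.mpr hp0).trans hpf)

theorem coeff_prod_geom_sum_monicIrreducibleNonzeroConstLE {n k : ℕ} (hk : k ≤ n) :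
    coeff k (∏ p : monicIrreducibleNonzeroConstLE F n,
        ∑ j ∈ range (n + 1), ((X : ℤ⟦X⟧) ^ (p : F[X]).natDegree) ^ j) =
      (monicNonzeroConst F k).ncard := by
  classical
  rw [coeff_prod_geom_sum _ (fun p hp => ⟨(mem_monicIrreducibleNonzeroConstLE.mp hp).1,
    (mem_monicIrreducibleNonzeroConstLE.mp hp).2.1⟩) hk]
  congr 2
  ext f
  simp only [monicNonzeroConst, Set.mem_ofPred_eq]
  constructor
  · rintro ⟨hf, rfl, hfS⟩
    exact ⟨hf, rfl, (forall_mem_normalizedFactors_iff hf hk).mp hfS⟩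
  · rintro ⟨hf, rfl, hf0⟩
    exact ⟨hf, rfl, (forall_mem_normalizedFactors_iff hf hk).mpr hf0⟩

theorem prod_Icc_pow_ncard_monicIrreducibleNonzeroConst {M : Type*} [CommMonoid M] (n : ℕ)
    (g : ℕ → M) :
    ∏ d ∈ Icc 1 n, g d ^ (monicIrreducibleNonzeroConst F d).ncard =
      ∏ p : monicIrreducibleNonzeroConstLE F n, g (p : F[X]).natDegree := by
  classical
  rw [prod_coe_sort (monicIrreducibleNonzeroConstLE F n) fun p => g p.natDegree,
    ← prod_fiberwise_of_maps_to (t := Icc 1 n) fun p hp => mem_Icc.mpr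
      ⟨(mem_monicIrreducibleNonzeroConstLE.mp hp).2.1.natDegree_pos,
        (mem_monicIrreducibleNonzeroConstLE.mp hp).2.2.2⟩]
  refine prod_congr rfl fun d hd => ?_
  rw [prod_congr rfl fun p hp => congrArg g (mem_filter.mp hp).2, prod_const,
    ← Set.ncard_coe_finset]
  congr 2
  ext p
  simp only [coe_filter, mem_monicIrreducibleNonzeroConstLE, monicIrreducibleNonzeroConst,
    Set.mem_ofPred_eq]
  constructor
  · rintro ⟨hm, hi, rfl, h0⟩
    exact ⟨⟨hm, hi, h0, (mem_Icc.mp hd).2⟩, rfl⟩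
  · rintro ⟨⟨hm, hi, h0, -⟩, rfl⟩
    exact ⟨hm, hi, rfl, h0⟩

end FiniteField

section Series

open Finset

variable (F : Type*) [Field F] [Fintype F]

noncomputable def monicNonzeroConstSeries : ℤ⟦X⟧ :=
  mk fun m => ((monicNonzeroConst F m).ncard : ℤ)

theorem monicNonzeroConstSeries_mul_one_sub :
    monicNonzeroConstSeries F * (1 - C (Fintype.card F : ℤ) * X) = 1 - X := by
  have hM (m : ℕ) : ((monicNonzeroConst F (m + 1)).ncard : ℤ) =
      (Fintype.card F : ℤ) ^ (m + 1) - (Fintype.card F : ℤ) ^ m := by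
    rw [eq_sub_iff_add_eq]
    exact_mod_cast ncard_monicNonzeroConst_succ F m
  rw [mul_sub, mul_one, mul_left_comm]
  ext (_ | k)
  · simp [monicNonzeroConstSeries, monicNonzeroConst_zero]
  rw [map_sub, map_sub, coeff_C_mul, coeff_succ_mul_X]
  rcases k with _ | k
  · simp [monicNonzeroConstSeries, monicNonzeroConst_zero, hM, coeff_X]
  · rw [monicNonzeroConstSeries, coeff_mk, coeff_mk, hM, hM, coeff_one, coeff_X, if_neg (by omega),
      if_neg (by omega)]
    ring

theorem X_pow_dvd_prod_mul_monicNonzeroConstSeries_sub_one (n : ℕ) :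
    X ^ (n + 1) ∣ (∏ d ∈ Icc 1 n, (1 - X ^ d : ℤ⟦X⟧) ^ (monicIrreducibleNonzeroConst F d).ncard) *
      monicNonzeroConstSeries F - 1 := by
  -- the Euler product `∏_p (1 - X^deg p)⁻¹` over the irreducibles of degree `≤ n`, truncated
  set G := ∏ p : monicIrreducibleNonzeroConstLE F n,
    ∑ j ∈ range (n + 1), ((X : ℤ⟦X⟧) ^ (p : F[X]).natDegree) ^ j
  have hSG : X ^ (n + 1) ∣ monicNonzeroConstSeries F - G := X_pow_dvd_iff.mpr fun k hk => by
    rw [map_sub, monicNonzeroConstSeries, coeff_mk,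
      coeff_prod_geom_sum_monicIrreducibleNonzeroConstLE (by omega), sub_self]
  have hEG : X ^ (n + 1) ∣
      (∏ d ∈ Icc 1 n, (1 - X ^ d : ℤ⟦X⟧) ^ (monicIrreducibleNonzeroConst F d).ncard) * G - 1 := by
    rw [prod_Icc_pow_ncard_monicIrreducibleNonzeroConst n fun d => (1 - X ^ d : ℤ⟦X⟧),
      ← prod_mul_distrib]
    simp_rw [mul_neg_geom_sum]
    refine dvd_prod_one_sub_sub_one fun p _ => ?_
    rw [← pow_mul, mul_comm, pow_mul]
    exact dvd_pow_self _ (mem_monicIrreducibleNonzeroConstLE.mp p.2).2.1.natDegree_pos.ne'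
  rw [show ∀ E : ℤ⟦X⟧, E * monicNonzeroConstSeries F - 1 =
    E * (monicNonzeroConstSeries F - G) + (E * G - 1) from fun E => by ring]
  exact dvd_add (dvd_mul_of_dvd_right hSG _) hEG

end Series

/-- The identity cleared of denominators, `∏_d (1 + u^d)^{N d} (1 + u)(1 - qu) = 1 - qu²`, read
coefficientwise; factors with `d > n` do not affect the coefficient of `u^n`. -/
theorem prod_irreducible_nonzero_const (q : ℕ) (F : Type*) [Field F] [Fintype F]
    (hq : Fintype.card F = q) (N : ℕ → ℕ)
    (hN : ∀ d, N d = {p : Polynomial F |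
      p.Monic ∧ Irreducible p ∧ p.natDegree = d ∧ p.coeff 0 ≠ 0}.ncard) :
    ∀ n : ℕ,
      (PowerSeries.coeff (R := ℤ) n)
        ((∏ d ∈ Finset.Icc 1 n, (1 + (X : PowerSeries ℤ) ^ d) ^ N d) *
          ((1 + X) * (1 - PowerSeries.C (R := ℤ) (q : ℤ) * X))) =
      (PowerSeries.coeff (R := ℤ) n) (1 - PowerSeries.C (R := ℤ) (q : ℤ) * X ^ 2) := by
  subst hq
  obtain rfl : N = fun d => (monicIrreducibleNonzeroConst F d).ncard := funext hN
  intro n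
  set q : ℤ := (Fintype.card F : ℤ)
  set P := ∏ d ∈ Finset.Icc 1 n, (1 + X ^ d : ℤ⟦X⟧) ^ (monicIrreducibleNonzeroConst F d).ncard
  set E := ∏ d ∈ Finset.Icc 1 n, (1 - X ^ d : ℤ⟦X⟧) ^ (monicIrreducibleNonzeroConst F d).ncard
  set S := monicNonzeroConstSeries F
  have hES : X ^ (n + 1) ∣ E * S - 1 := X_pow_dvd_prod_mul_monicNonzeroConstSeries_sub_one F n
  have hES₂ : X ^ (n + 1) ∣ expand 2 two_ne_zero E * expand 2 two_ne_zero S - 1 := by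
    simpa using X_pow_dvd_expand_sub two_ne_zero hES
  have hS : S * (1 - C q * X) = 1 - X := monicNonzeroConstSeries_mul_one_sub F
  have hS₂ : expand 2 two_ne_zero S * (1 - C q * X ^ 2) = 1 - X ^ 2 := by
    simpa [expand_C] using congrArg (expand 2 two_ne_zero) hS
  have hPE : P * E = expand 2 two_ne_zero E := prod_one_add_pow_mul_prod_one_sub_pow _ _
  have hdvd : X ^ (n + 1) ∣ P * ((1 + X) * (1 - C q * X)) - (1 - C q * X ^ 2) := by
    rw [show P * ((1 + X) * (1 - C q * X)) - (1 - C q * X ^ 2) =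
        (1 - C q * X ^ 2) * (expand 2 two_ne_zero E * expand 2 two_ne_zero S - 1) -
          P * ((1 + X) * (1 - C q * X)) * (E * S - 1) by
      linear_combination ((1 + X) * (1 - C q * X) * S) * hPE +
        ((1 + X) * expand 2 two_ne_zero E) * hS - expand 2 two_ne_zero E * hS₂]
    exact dvd_sub (dvd_mul_of_dvd_right hES₂ _) (dvd_mul_of_dvd_right hES _)
  simpa [sub_eq_zero] using X_pow_dvd_iff.mp hdvd n (Nat.lt_succ_self n)
end

section
/- For q even (a power of 2) and n ≥ 1, the number of monic squarefree polynomials of degree n over F_q with constant term equal to (-1)^n = 1 is (q^{n+1} - q^n + (-1)^{n+1}(q-1))/(q^2 - 1). -/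
set_option linter.unusedSectionVars false
set_option maxHeartbeats 1000000

open Polynomial Finset

namespace RSS
variable {F : Type*} [Field F] [Fintype F]

variable {F : Type*} [Field F] [Fintype F]

lemma finite_deg_le (n : ℕ) : {p : F[X] | p.natDegree ≤ n}.Finite := by
  classical
  apply Set.Finite.of_finite_image (f := fun p : F[X] => fun i : Fin (n+1) => p.coeff i)
    (Set.toFinite _)
  intro p hp q hq h
  ext k
  by_cases hk : k ≤ n
  · exact congrFun h ⟨k, Nat.lt_succ_of_le hk⟩
  · rw [coeff_eq_zero_of_natDegree_lt (lt_of_le_of_lt hp (by omega)),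
      coeff_eq_zero_of_natDegree_lt (lt_of_le_of_lt hq (by omega))]

lemma finite_subset_deg_le {s : Set F[X]} (n : ℕ) (h : ∀ p ∈ s, p.natDegree ≤ n) :
    s.Finite := (finite_deg_le n).subset h

def Mo (n : ℕ) (c : F) : Set F[X] := {p | p.Monic ∧ p.natDegree = n ∧ p.coeff 0 = c}

def SF (n : ℕ) (c : F) : Set F[X] :=
  {p | p.Monic ∧ Squarefree p ∧ p.natDegree = n ∧ p.coeff 0 = c}

def U (n : ℕ) : Set F[X] := {p | p.Monic ∧ Squarefree p ∧ p.natDegree = n ∧ p.coeff 0 ≠ 0}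

lemma Mo_finite (n : ℕ) (c : F) : (Mo n c).Finite :=
  finite_subset_deg_le n (fun _ hp => hp.2.1.le)
lemma SF_finite (n : ℕ) (c : F) : (SF n c).Finite :=
  finite_subset_deg_le n (fun _ hp => hp.2.2.1.le)
lemma U_finite (n : ℕ) : (U n : Set F[X]).Finite :=
  finite_subset_deg_le n (fun _ hp => hp.2.2.1.le)

section MoCard
variable (m : ℕ) (c : F)

private noncomputable def phi (v : Fin m → F) : F[X] :=
  X ^ (m+1) + (C c + ∑ i : Fin m, C (v i) * X ^ ((i : ℕ)+1))

private lemma phi_tail_deg (v : Fin m → F) :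
    (C c + ∑ i : Fin m, C (v i) * X ^ ((i : ℕ)+1)).degree < ((m+1 : ℕ) : WithBot ℕ) := by
  apply lt_of_le_of_lt (degree_add_le _ _)
  apply max_lt
  · exact lt_of_le_of_lt degree_C_le (by exact_mod_cast Nat.succ_pos m)
  · apply lt_of_le_of_lt (degree_sum_le _ _)
    apply (Finset.sup_lt_iff (by exact_mod_cast WithBot.bot_lt_coe (m+1))).2
    intro i _
    exact lt_of_le_of_lt (degree_C_mul_X_pow_le _ _)
      (by exact_mod_cast Nat.succ_lt_succ i.isLt)

private lemma phi_monic (v : Fin m → F) : (phi m c v).Monic :=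
  monic_X_pow_add (phi_tail_deg m c v)

private lemma phi_natDegree (v : Fin m → F) : (phi m c v).natDegree = m + 1 := by
  have h : (phi m c v).degree = ((m+1 : ℕ) : WithBot ℕ) := by
    rw [phi, degree_add_eq_left_of_degree_lt, degree_X_pow]
    rw [degree_X_pow]; exact phi_tail_deg m c v
  exact natDegree_eq_of_degree_eq_some h

private lemma phi_coeff_zero (v : Fin m → F) : (phi m c v).coeff 0 = c := by
  simp only [phi, coeff_add, coeff_X_pow, coeff_C, finset_sum_coeff, coeff_C_mul]
  rw [Finset.sum_eq_zero]
  · simp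
  · intro i _
    simp [coeff_X_pow]

private lemma phi_coeff_succ (v : Fin m → F) (i : Fin m) :
    (phi m c v).coeff ((i : ℕ) + 1) = v i := by
  simp only [phi, coeff_add, coeff_X_pow, coeff_C, finset_sum_coeff, coeff_C_mul]
  rw [Finset.sum_eq_single i]
  · have h1 : ¬ (m + 1 = (i : ℕ) + 1) := by have := i.isLt; omega
    have h2 : ¬ ((i : ℕ) + 1 = 0) := by omega
    have h3 : ¬ ((i : ℕ) = m) := by have := i.isLt; omega
    simp [h1, h2, h3]
  · intro j _ hj
    have : ¬ ((i : ℕ) + 1 = (j : ℕ) + 1) := by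
      simp only [Nat.add_right_cancel_iff]
      exact fun h => hj (Fin.ext h.symm)
    rw [if_neg this, mul_zero]
  · simp

lemma ncard_Mo : (Mo (m+1) c).ncard = Fintype.card F ^ m := by
  classical
  have hbij : Set.BijOn (phi m c) Set.univ (Mo (m+1) c) := by
    refine ⟨fun v _ => ⟨phi_monic m c v, phi_natDegree m c v, phi_coeff_zero m c v⟩, ?_, ?_⟩
    · intro v _ w _ h
      funext i
      rw [← phi_coeff_succ m c v i, ← phi_coeff_succ m c w i, h]
    · rintro p ⟨hp1, hp2, hp3⟩
      refine ⟨fun i => p.coeff ((i : ℕ) + 1), Set.mem_univ _, ?_⟩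
      ext k
      by_cases h0 : k = 0
      · subst h0; rw [phi_coeff_zero, hp3]
      by_cases hm : k = m + 1
      · subst hm
        have h1 : (phi m c fun i => p.coeff ((i : ℕ) + 1)).coeff (m+1) = 1 := by
          have := (phi_monic m c (fun i => p.coeff ((i : ℕ) + 1))).coeff_natDegree
          rwa [phi_natDegree] at this
        have h2 : p.coeff (m+1) = 1 := by
          have := hp1.coeff_natDegree; rwa [hp2] at this
        rw [h1, h2]
      by_cases hk : k ≤ m
      · have hk1 : k - 1 < m := by omega
        have hkk : k = ((⟨k-1, hk1⟩ : Fin m) : ℕ) + 1 := by simp; omega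
        rw [hkk, phi_coeff_succ]
      · rw [coeff_eq_zero_of_natDegree_lt (by rw [phi_natDegree]; omega),
          coeff_eq_zero_of_natDegree_lt (by rw [hp2]; omega)]
  rw [← hbij.image_eq, Set.ncard_image_of_injOn hbij.injOn]
  simp [Set.ncard_univ, Nat.card_eq_fintype_card]
end MoCard
lemma monic_eq_one_of_isUnit {b : F[X]} (hb : b.Monic) (hu : IsUnit b) : b = 1 := by
  rw [← hb.natDegree_eq_zero]
  exact natDegree_eq_zero_of_isUnit hu

lemma exists_decomp (f : F[X]) (hf : f.Monic) :
    ∃ a b : F[X], a.Monic ∧ b.Monic ∧ Squarefree a ∧ f = a * b ^ 2 := by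
  generalize hd : f.natDegree = N
  induction N using Nat.strong_induction_on generalizing f with
  | _ N ih =>
  subst hd
  by_cases hsf : Squarefree f
  · exact ⟨f, 1, hf, monic_one, hsf, by ring⟩
  · rw [Squarefree] at hsf; push_neg at hsf
    obtain ⟨x, hx2, hxu⟩ := hsf
    have hx0 : x ≠ 0 := by
      rintro rfl
      exact hf.ne_zero (zero_dvd_iff.1 (by simpa using hx2))
    have hl : x.leadingCoeff ≠ 0 := leadingCoeff_ne_zero.2 hx0
    set p := x * C x.leadingCoeff⁻¹ with hp
    have hpm : p.Monic := monic_mul_leadingCoeff_inv hx0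
    have hCunit : C x.leadingCoeff⁻¹ * C x.leadingCoeff = 1 := by
      rw [← C_mul, inv_mul_cancel₀ hl, C_1]
    have key : p * p * (C x.leadingCoeff * C x.leadingCoeff) = x * x := by
      calc p * p * (C x.leadingCoeff * C x.leadingCoeff)
          = x * x * ((C x.leadingCoeff⁻¹ * C x.leadingCoeff) *
              (C x.leadingCoeff⁻¹ * C x.leadingCoeff)) := by rw [hp]; ring
        _ = x * x := by rw [hCunit]; ring
    have hpd : p * p ∣ f := dvd_trans ⟨_, key.symm⟩ hx2
    have hpu : ¬ IsUnit p := by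
      intro hu
      apply hxu
      have hx : x = p * C x.leadingCoeff := by
        rw [hp, mul_assoc, hCunit, mul_one]
      rw [hx]
      exact hu.mul (isUnit_C.2 (isUnit_iff_ne_zero.2 hl))
    have hp1 : 1 ≤ p.natDegree := by
      rcases Nat.eq_zero_or_pos p.natDegree with h | h
      · exact absurd (hpm.natDegree_eq_zero.1 h ▸ isUnit_one) hpu
      · exact h
    obtain ⟨h, hh⟩ := hpd
    have hhm : h.Monic := by
      have : ((p * p) * h).Monic := by rwa [← hh]
      exact (hpm.mul hpm).of_mul_monic_left this
    have hdeg : h.natDegree < f.natDegree := by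
      rw [hh, natDegree_mul (mul_ne_zero hpm.ne_zero hpm.ne_zero) hhm.ne_zero,
        natDegree_mul hpm.ne_zero hpm.ne_zero]
      omega
    obtain ⟨a, b, ham, hbm, hasf, hab⟩ := ih h.natDegree hdeg h hhm rfl
    exact ⟨a, p * b, ham, hpm.mul hbm, hasf, by rw [hh, hab]; ring⟩

lemma unique_decomp {a b a' b' : F[X]} (ha : a.Monic) (hb : b.Monic) (ha' : a'.Monic)
    (hb' : b'.Monic) (hsa : Squarefree a) (hsa' : Squarefree a')
    (heq : a * b ^ 2 = a' * b' ^ 2) : a = a' ∧ b = b' := by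
  generalize hd : b.natDegree = N
  induction N using Nat.strong_induction_on generalizing a b a' b' with
  | _ N ih =>
  subst hd
  by_cases hbu : IsUnit b
  · have hb1 : b = 1 := monic_eq_one_of_isUnit hb hbu
    subst hb1
    rw [one_pow, mul_one] at heq
    have hb'd : b' * b' ∣ a := by rw [heq, pow_two]; exact ⟨a', by ring⟩
    have hb'1 : b' = 1 := monic_eq_one_of_isUnit hb' (hsa _ hb'd)
    subst hb'1
    rw [one_pow, mul_one] at heq
    exact ⟨heq, rfl⟩
  · obtain ⟨i, hi, hib⟩ := WfDvdMonoid.exists_irreducible_factor hbu hb.ne_zero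
    have hi0 : i ≠ 0 := hi.ne_zero
    have hil : i.leadingCoeff ≠ 0 := leadingCoeff_ne_zero.2 hi0
    set p := i * C i.leadingCoeff⁻¹ with hp
    have hpm : p.Monic := monic_mul_leadingCoeff_inv hi0
    have hassoc : Associated i p :=
      ⟨(isUnit_C.2 (isUnit_iff_ne_zero.2 (inv_ne_zero hil))).unit, rfl⟩
    have hprime : Prime p := UniqueFactorizationMonoid.irreducible_iff_prime.1
      (hassoc.irreducible hi)
    have hp0 : p ≠ 0 := hprime.ne_zero
    have hpb : p ∣ b := (hassoc.dvd_iff_dvd_left).1 hib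
    have hp1 : 1 ≤ p.natDegree := by
      rcases Nat.eq_zero_or_pos p.natDegree with h | h
      · exact absurd (hpm.natDegree_eq_zero.1 h ▸ isUnit_one) hprime.not_unit
      · exact h
    -- p divides b'
    have hpb' : p ∣ b' := by
      by_contra hpb'
      have hpp : p * p ∣ a' * b' ^ 2 := by
        rw [← heq]
        obtain ⟨β, hβ⟩ := hpb
        exact ⟨a * β ^ 2, by rw [hβ]; ring⟩
      have hpa' : p ∣ a' := by
        rcases hprime.2.2 _ _ (dvd_trans (dvd_mul_right p p) hpp) with h | h
        · exact h
        · exact absurd ((hprime.dvd_of_dvd_pow h)) hpb'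
      obtain ⟨a'', ha''⟩ := hpa'
      have hpa'' : p ∣ a'' := by
        obtain ⟨t, ht⟩ := hpp
        rw [ha''] at ht
        have : a'' * b' ^ 2 = p * t :=
          mul_left_cancel₀ hp0 (show p * (a'' * b' ^ 2) = p * (p * t) by linear_combination ht)
        rcases hprime.2.2 _ _ ⟨t, this⟩ with h | h
        · exact h
        · exact absurd (hprime.dvd_of_dvd_pow h) hpb'
      obtain ⟨s, hs⟩ := hpa''
      exact absurd (hsa' p ⟨s, by rw [ha'', hs]; ring⟩) hprime.not_unit
    obtain ⟨β, hβ⟩ := hpb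
    obtain ⟨β', hβ'⟩ := hpb'
    have hβm : β.Monic := hpm.of_mul_monic_left (by rwa [← hβ])
    have hβ'm : β'.Monic := hpm.of_mul_monic_left (by rwa [← hβ'])
    have heq2 : a * β ^ 2 = a' * β' ^ 2 := by
      have : p ^ 2 * (a * β ^ 2) = p ^ 2 * (a' * β' ^ 2) := by
        rw [show p ^ 2 * (a * β ^ 2) = a * (p * β) ^ 2 by ring,
          show p ^ 2 * (a' * β' ^ 2) = a' * (p * β') ^ 2 by ring, ← hβ, ← hβ', heq]
      exact mul_left_cancel₀ (pow_ne_zero 2 hp0) this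
    have hdeg : β.natDegree < b.natDegree := by
      rw [hβ, natDegree_mul hp0 hβm.ne_zero]; omega
    obtain ⟨h1, h2⟩ := ih β.natDegree hdeg ha hβm ha' hβ'm hsa hsa' heq2 rfl
    exact ⟨h1, by rw [hβ, hβ', h2]⟩



-- generic ncard helpers
lemma ncard_prod' {α β : Type*} {s : Set α} {t : Set β} (hs : s.Finite) (ht : t.Finite) :
    (s ×ˢ t).ncard = s.ncard * t.ncard := by
  classical
  rw [Set.ncard_eq_toFinset_card _ (hs.prod ht), Set.ncard_eq_toFinset_card _ hs,
    Set.ncard_eq_toFinset_card _ ht, ← Set.Finite.toFinset_prod, Finset.card_product]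

lemma ncard_biUnion' {ι α : Type*} (I : Finset ι) (f : ι → Set α)
    (hf : ∀ i ∈ I, (f i).Finite)
    (hd : ∀ i ∈ I, ∀ j ∈ I, i ≠ j → Disjoint (f i) (f j)) :
    (⋃ i ∈ I, f i).ncard = ∑ i ∈ I, (f i).ncard := by
  classical
  induction I using Finset.induction with
  | empty => simp
  | @insert a I' hnot ih =>
    rw [Finset.sum_insert hnot, Finset.set_biUnion_insert]
    rw [Set.ncard_union_eq ?disj (hf a (mem_insert_self a I'))
      (show (⋃ i ∈ I', f i).Finite from
        Set.Finite.biUnion I'.finite_toSet (fun i hi => hf i (mem_insert_of_mem hi)))]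
    · rw [ih (fun i hi => hf i (mem_insert_of_mem hi))
        (fun i hi j hj hij => hd i (mem_insert_of_mem hi) j (mem_insert_of_mem hj) hij)]
    case disj =>
      apply Set.disjoint_iUnion₂_right.2
      intro i hi
      exact hd a (mem_insert_self a I') i (mem_insert_of_mem hi)
        (fun h => hnot (h ▸ hi))



def D (n : ℕ) (c : F) : Set (F[X] × F[X]) :=
  {ab | ab.1.Monic ∧ Squarefree ab.1 ∧ ab.2.Monic ∧
    ab.1.natDegree + 2 * ab.2.natDegree = n ∧ ab.1.coeff 0 * ab.2.coeff 0 ^ 2 = c}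

def Dk (n : ℕ) (c : F) (k : ℕ) : Set (F[X] × F[X]) :=
  {ab ∈ D n c | ab.2.natDegree = k}

lemma D_finite (n : ℕ) (c : F) : (D n c).Finite := by
  apply Set.Finite.subset ((finite_deg_le n).prod (finite_deg_le n))
  rintro ⟨a, b⟩ ⟨-, -, -, hd, -⟩
  dsimp only at hd
  exact ⟨by simp only [Set.mem_setOf_eq]; omega, by simp only [Set.mem_setOf_eq]; omega⟩

lemma Dk_finite (n : ℕ) (c : F) (k : ℕ) : (Dk n c k).Finite :=
  (D_finite n c).subset (fun _ h => h.1)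

lemma coeff_zero_mul_sq (a b : F[X]) : (a * b ^ 2).coeff 0 = a.coeff 0 * b.coeff 0 ^ 2 := by
  rw [pow_two, pow_two, mul_coeff_zero, mul_coeff_zero]

lemma natDegree_mul_sq {a b : F[X]} (ha : a ≠ 0) (hb : b ≠ 0) :
    (a * b ^ 2).natDegree = a.natDegree + 2 * b.natDegree := by
  rw [natDegree_mul ha (pow_ne_zero 2 hb), natDegree_pow]

lemma bijOn_mul (n : ℕ) (c : F) :
    Set.BijOn (fun ab : F[X] × F[X] => ab.1 * ab.2 ^ 2) (D n c) (Mo n c) := by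
  refine ⟨?_, ?_, ?_⟩
  · rintro ⟨a, b⟩ ⟨ham, hasf, hbm, hdeg, hco⟩
    exact ⟨ham.mul (hbm.pow 2), by
      rw [natDegree_mul_sq ham.ne_zero hbm.ne_zero]; exact hdeg,
      by rw [coeff_zero_mul_sq]; exact hco⟩
  · rintro ⟨a, b⟩ ⟨ham, hasf, hbm, _, _⟩ ⟨a', b'⟩ ⟨ham', hasf', hbm', _, _⟩ h
    simp only [Prod.mk.injEq]
    exact unique_decomp ham hbm ham' hbm' hasf hasf' h
  · rintro f ⟨hfm, hfd, hfc⟩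
    obtain ⟨a, b, ham, hbm, hasf, hab⟩ := exists_decomp f hfm
    refine ⟨⟨a, b⟩, ⟨ham, hasf, hbm, ?_, ?_⟩, hab.symm⟩
    · rw [← hfd, hab, natDegree_mul_sq ham.ne_zero hbm.ne_zero]
    · rw [← hfc, hab, coeff_zero_mul_sq]

lemma D_eq_biUnion (n : ℕ) (c : F) :
    D n c = ⋃ k ∈ Finset.range (n/2 + 1), Dk n c k := by
  ext ⟨a, b⟩
  simp only [Set.mem_iUnion, Finset.mem_range, Dk, Set.mem_setOf_eq]
  constructor
  · intro h
    refine ⟨b.natDegree, ?_, h, rfl⟩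
    obtain ⟨-, -, -, hd, -⟩ := h
    dsimp only at hd
    omega
  · rintro ⟨k, _, h, _⟩
    exact h

lemma ncard_Mo_eq_sum (n : ℕ) (c : F) :
    (Mo n c).ncard = ∑ k ∈ Finset.range (n/2 + 1), (Dk n c k).ncard := by
  rw [← (bijOn_mul n c).image_eq, Set.ncard_image_of_injOn (bijOn_mul n c).injOn,
    D_eq_biUnion]
  apply ncard_biUnion'
  · exact fun k _ => Dk_finite n c k
  · intro i _ j _ hij
    rw [Set.disjoint_left]
    rintro ⟨a, b⟩ ⟨_, h1⟩ ⟨_, h2⟩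
    exact hij (h1 ▸ h2 ▸ rfl)


lemma ncard_Dk_zero (n : ℕ) (c : F) : (Dk n c 0).ncard = (SF n c).ncard := by
  have himg : Dk n c 0 = (fun a : F[X] => (a, (1 : F[X]))) '' SF n c := by
    ext ⟨a, b⟩
    simp only [Dk, D, Set.mem_setOf_eq, Set.mem_image, Prod.mk.injEq]
    constructor
    · rintro ⟨⟨ham, hasf, hbm, hdeg, hco⟩, hb0⟩
      have hb1 : b = 1 := hbm.natDegree_eq_zero.1 hb0
      subst hb1
      simp only [coeff_one_zero, one_pow, mul_one] at hco
      exact ⟨a, ⟨ham, hasf, by omega, hco⟩, rfl, rfl⟩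
    · rintro ⟨a', ⟨ham, hasf, hdeg, hco⟩, rfl, rfl⟩
      exact ⟨⟨ham, hasf, monic_one, by simpa using hdeg, by simp [hco]⟩, natDegree_one⟩
  rw [himg, Set.ncard_image_of_injOn (fun x _ y _ h => congrArg Prod.fst h)]

section Char2
variable (h2 : ∀ x : F, x + x = 0)
include h2

lemma sq_inj {x y : F} (h : x * x = y * y) : x = y := by
  have hz : (x + y) * (x + y) = 0 := by
    have e : (x + y) * (x + y) = (x * x - y * y) + ((x * y + x * y) + (y * y + y * y)) := by
      ring
    rw [h, sub_self, h2, h2, zero_add, add_zero] at e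
    exact e
  have hxy : x + y = 0 := by
    rcases mul_eq_zero.1 hz with h' | h' <;> exact h'
  calc x = (x + y) + (-y) := by ring
    _ = -y := by rw [hxy, zero_add]
    _ = y := neg_eq_of_add_eq_zero_left (h2 y)

lemma sq_surj : ∀ c : F, ∃ d : F, d * d = c := by
  have : Function.Surjective (fun x : F => x * x) :=
    Finite.injective_iff_surjective.1 (fun x y h => sq_inj h2 h)
  exact fun c => this c

lemma ncard_Dk_pos (n : ℕ) (c : F) (hc : c ≠ 0) (k : ℕ) (hk : 1 ≤ k) (h2k : 2 * k ≤ n) :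
    (Dk n c k).ncard = (U (n - 2*k) : Set F[X]).ncard * (Mo k (1:F)).ncard := by
  classical
  have hbij : Set.BijOn (fun ab : F[X] × F[X] => (ab.1, ab.2 + C (1 - ab.2.coeff 0)))
      (Dk n c k) ((U (n - 2*k)) ×ˢ (Mo k (1:F))) := by
    refine ⟨?_, ?_, ?_⟩
    · rintro ⟨a, b⟩ ⟨⟨ham, hasf, hbm, hdeg, hco⟩, hbk⟩
      dsimp only at *
      have hb0 : b.degree = (k : WithBot ℕ) := by
        rw [← hbk]; exact degree_eq_natDegree hbm.ne_zero
      have hCdeg : (C (1 - b.coeff 0)).degree < b.degree := by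
        apply lt_of_le_of_lt degree_C_le
        rw [hb0]; exact_mod_cast hk
      constructor
      · exact ⟨ham, hasf, by dsimp only; omega, left_ne_zero_of_mul (hco ▸ hc)⟩
      · refine ⟨hbm.add_of_left hCdeg, ?_, ?_⟩
        · rw [natDegree_add_C, hbk]
        · simp [coeff_add, coeff_C]
    · rintro ⟨a, b⟩ ⟨⟨ham, hasf, hbm, hdeg, hco⟩, hbk⟩ ⟨a', b'⟩
        ⟨⟨ham', hasf', hbm', hdeg', hco'⟩, hbk'⟩ h
      dsimp only at *
      rw [Prod.mk.injEq] at h ⊢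
      obtain ⟨h1, h3⟩ := h
      subst h1
      have ha0 : a.coeff 0 ≠ 0 := left_ne_zero_of_mul (hco ▸ hc)
      have hb0eq : b.coeff 0 = b'.coeff 0 := by
        apply sq_inj h2
        have : a.coeff 0 * b.coeff 0 ^ 2 = a.coeff 0 * b'.coeff 0 ^ 2 := by
          rw [hco, hco']
        have := mul_left_cancel₀ ha0 this
        rw [pow_two, pow_two] at this
        exact this
      refine ⟨rfl, ?_⟩
      rw [hb0eq] at h3
      exact add_right_cancel h3
    · rintro ⟨a, b1⟩ ⟨⟨ham, hasf, hadeg, ha0⟩, ⟨hb1m, hb1deg, hb1c⟩⟩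
      dsimp only at *
      obtain ⟨d, hd⟩ := sq_surj h2 (c * (a.coeff 0)⁻¹)
      have hb1ne : b1 ≠ 0 := hb1m.ne_zero
      have hb1degc : ((0:ℕ) : WithBot ℕ) < b1.degree := by
        rw [degree_eq_natDegree hb1ne, hb1deg]; exact_mod_cast hk
      set b := b1 + C (d - 1) with hbdef
      have hCdeg : (C (d - 1)).degree < b1.degree :=
        lt_of_le_of_lt degree_C_le hb1degc
      have hbm : b.Monic := hb1m.add_of_left hCdeg
      have hbdeg : b.natDegree = k := by rw [hbdef, natDegree_add_C, hb1deg]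
      have hbc : b.coeff 0 = d := by
        rw [hbdef, coeff_add, coeff_C, if_pos rfl, hb1c]; ring
      refine ⟨⟨a, b⟩, ⟨⟨ham, hasf, hbm, ?_, ?_⟩, hbdeg⟩, ?_⟩
      · dsimp only; omega
      · dsimp only
        rw [hbc, pow_two, hd, ← mul_assoc, mul_comm (a.coeff 0) c,
          mul_assoc, mul_inv_cancel₀ ha0, mul_one]
      · dsimp only
        rw [Prod.mk.injEq]
        refine ⟨rfl, ?_⟩
        rw [hbc, hbdef, add_assoc, ← C_add, show d - 1 + (1 - d) = 0 by ring, C_0, add_zero]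
  rw [← ncard_prod' (U_finite _) (Mo_finite _ _), ← hbij.image_eq,
    Set.ncard_image_of_injOn hbij.injOn]

end Char2

section C2
variable (h2 : ∀ x : F, x + x = 0)
include h2

lemma keyN (n : ℕ) (hn : 1 ≤ n) (c : F) (hc : c ≠ 0) :
    Fintype.card F ^ (n-1) = (SF n c).ncard +
      ∑ j ∈ Finset.range (n/2), (U (n - 2*(j+1)) : Set F[X]).ncard * Fintype.card F ^ j := by
  obtain ⟨m, rfl⟩ : ∃ m, n = m + 1 := ⟨n-1, by omega⟩
  calc Fintype.card F ^ (m + 1 - 1) = (Mo (m+1) c).ncard := (ncard_Mo m c).symm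
    _ = ∑ k ∈ Finset.range ((m+1)/2 + 1), (Dk (m+1) c k).ncard := ncard_Mo_eq_sum (m+1) c
    _ = ∑ j ∈ Finset.range ((m+1)/2), (Dk (m+1) c (j+1)).ncard + (Dk (m+1) c 0).ncard :=
        Finset.sum_range_succ' _ _
    _ = _ := by
        rw [ncard_Dk_zero, add_comm]
        congr 1
        apply Finset.sum_congr rfl
        intro j hj
        rw [Finset.mem_range] at hj
        rw [ncard_Dk_pos h2 (m+1) c hc (j+1) (by omega) (by omega), ncard_Mo j 1]

lemma SF_const (n : ℕ) (hn : 1 ≤ n) (c : F) (hc : c ≠ 0) :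
    (SF n c).ncard = (SF n (1:F)).ncard := by
  have h1 := keyN h2 n hn c hc
  have h2' := keyN h2 n hn 1 one_ne_zero
  omega

lemma U_zero : (U 0 : Set F[X]).ncard = 1 := by
  have : (U 0 : Set F[X]) = {1} := by
    ext p
    simp only [U, Set.mem_setOf_eq, Set.mem_singleton_iff]
    constructor
    · rintro ⟨hm, _, hd, _⟩
      exact hm.natDegree_eq_zero.1 hd
    · rintro rfl
      exact ⟨monic_one, squarefree_one, natDegree_one, by simp⟩
  rw [this, Set.ncard_singleton]

lemma U_card (m : ℕ) (hm : 1 ≤ m) :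
    (U m : Set F[X]).ncard = (Fintype.card F - 1) * (SF m (1:F)).ncard := by
  classical
  have hU : (U m : Set F[X]) = ⋃ c ∈ Finset.univ.erase (0:F), SF m c := by
    ext p
    simp only [Set.mem_iUnion, Finset.mem_erase, Finset.mem_univ, and_true, U, SF,
      Set.mem_setOf_eq]
    constructor
    · rintro ⟨hm', hsf, hd, hc⟩
      exact ⟨p.coeff 0, hc, hm', hsf, hd, rfl⟩
    · rintro ⟨c, hc, hm', hsf, hd, hcc⟩
      exact ⟨hm', hsf, hd, hcc ▸ hc⟩
  rw [hU, ncard_biUnion' _ _ (fun c _ => SF_finite m c)]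
  · rw [Finset.sum_congr rfl (fun c hcm => SF_const h2 m hm c (Finset.mem_erase.1 hcm).1),
      Finset.sum_const, Finset.card_erase_of_mem (Finset.mem_univ 0), Finset.card_univ,
      smul_eq_mul]
  · intro i _ j _ hij
    rw [Set.disjoint_left]
    rintro p ⟨_, _, _, h1⟩ ⟨_, _, _, h2⟩
    exact hij (h1 ▸ h2 ▸ rfl)

end C2

lemma arith (q : ℤ) (u t : ℕ → ℤ) (ht0 : t 0 = 1) (ht : ∀ m, 1 ≤ m → t m = (q-1) * u m)
    (hkey : ∀ n, 1 ≤ n → q^(n-1) = u n + ∑ j ∈ Finset.range (n/2), t (n - 2*(j+1)) * q^j) :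
    ∀ n, 1 ≤ n → u n * (q+1) = q^n + (-1)^(n+1) := by
  intro n
  induction n using Nat.strong_induction_on with
  | _ n ih =>
  intro hn
  match n, hn with
  | 1, _ =>
    have hk := hkey 1 le_rfl
    norm_num at hk
    linear_combination (-(q+1)) * hk
  | 2, _ =>
    have hk := hkey 2 (by omega)
    norm_num at hk
    rw [ht0] at hk
    have : u 2 = q - 1 := by linarith
    rw [this]
    ring
  | (m+3), _ =>
    have hk := hkey (m+3) (by omega)
    have hk2 := hkey (m+1) (by omega)
    have htm : t (m+1) = (q-1) * u (m+1) := ht (m+1) (by omega)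
    have ihm : u (m+1) * (q+1) = q^(m+1) + (-1)^(m+1+1) := ih (m+1) (by omega) (by omega)
    have hhalf : (m+3)/2 = (m+1)/2 + 1 := by omega
    rw [hhalf, Finset.sum_range_succ' (fun j => t (m+3 - 2*(j+1)) * q^j) ((m+1)/2)] at hk
    have hshift : ∀ j ∈ Finset.range ((m+1)/2),
        t (m+3 - 2*(j+1+1)) * q^(j+1) = (t (m+1 - 2*(j+1)) * q^j) * q := by
      intro j hj
      have : m+3 - 2*(j+1+1) = m+1 - 2*(j+1) := by omega
      rw [this]; ring
    rw [Finset.sum_congr rfl hshift, ← Finset.sum_mul] at hk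
    have h30 : m + 3 - 2*(0+1) = m+1 := by omega
    rw [h30] at hk
    have hred : (m+3) - 1 = m + 2 := by omega
    rw [hred] at hk
    have hred2 : (m+1) - 1 = m := by omega
    rw [hred2] at hk2
    -- hk : q^(m+2) = u (m+3) + ((∑ S) * q + t (m+1) * q^0)
    -- hk2 : q^m = u (m+1) + ∑ S
    have goal : u (m+3) * (q+1) = q^(m+3) + (-1)^(m+3+1) := by
      linear_combination (-(q+1)) * hk + (q+1) * q * hk2 - (q+1) * htm + ihm
    exact goal


end RSS

open RSS Polynomial in
/-- For `q` even (a power of 2) and `n ≥ 1`, the number of monic squarefree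
polynomials of degree `n` over `F_q` with constant term `(-1)^n = 1` equals
`(q^(n+1) - q^n + (-1)^(n+1)(q-1))/(q² - 1)`. -/
theorem regular_semisimple_classes_SL_even_char (q n : ℕ) (hn : 1 ≤ n)
    (hq2 : Even q) (F : Type*) [Field F] [Fintype F] (hq : Fintype.card F = q) :
    ({p : Polynomial F | p.Monic ∧ Squarefree p ∧ p.natDegree = n ∧ p.coeff 0 = 1}.ncard : ℤ)
      * ((q : ℤ) ^ 2 - 1)
      = (q : ℤ) ^ (n + 1) - (q : ℤ) ^ n + (-1) ^ (n + 1) * ((q : ℤ) - 1) := by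
  classical
  subst hq
  obtain ⟨n', hp, hcard⟩ := FiniteField.card F (ringChar F)
  have h2dvd : 2 ∣ ringChar F := by
    refine Nat.Prime.dvd_of_dvd_pow (m := ringChar F) (n := (n' : ℕ)) Nat.prime_two ?_
    rw [← hcard]
    exact hq2.two_dvd
  have hr2 : ringChar F = 2 := ((Nat.prime_dvd_prime_iff_eq Nat.prime_two hp).1 h2dvd).symm
  have h2 : ∀ x : F, x + x = 0 := by
    intro x
    have hzero : (2 : F) = 0 := by
      have hcz := CharP.cast_eq_zero F (ringChar F)
      rw [hr2] at hcz
      exact_mod_cast hcz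
    rw [← two_mul, hzero, zero_mul]
  set Q : ℤ := (Fintype.card F : ℤ) with hQ
  have hq1 : 1 ≤ Fintype.card F := Fintype.card_pos
  have ht0 : ((U 0 : Set F[X]).ncard : ℤ) = 1 := by
    rw [U_zero h2]; norm_num
  have ht : ∀ m, 1 ≤ m →
      ((U m : Set F[X]).ncard : ℤ) = (Q - 1) * ((SF m (1:F)).ncard : ℤ) := by
    intro m hm
    rw [U_card h2 m hm]
    push_cast [Nat.cast_sub hq1]
    ring
  have hkey : ∀ nn, 1 ≤ nn → Q^(nn-1) = ((SF nn (1:F)).ncard : ℤ) +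
      ∑ j ∈ Finset.range (nn/2), ((U (nn-2*(j+1)) : Set F[X]).ncard : ℤ) * Q^j := by
    intro nn hnn
    have hc := keyN h2 nn hnn 1 one_ne_zero
    rw [hQ]
    exact_mod_cast hc
  have harith := arith Q (fun m => ((SF m (1:F)).ncard : ℤ))
    (fun m => ((U m : Set F[X]).ncard : ℤ)) ht0 ht hkey n hn
  show ((SF n (1:F)).ncard : ℤ) * (Q^2 - 1) = _
  linear_combination (Q - 1) * harith
end

section
/- For q odd and n ≥ 2 even, the number of monic squarefree polynomials of degree n over F_q with constant term 1 is (q^{n+1} - q^n - (q-1))/(q^2 - 1) - 1. -/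
open Polynomial Finset

set_option linter.unusedSectionVars false
open scoped Classical

noncomputable section

variable (F : Type*) [Field F] [Fintype F]

/-- The polynomial `X^n + ∑ a i X^i`. -/
noncomputable def psiF (n : ℕ) (a : Fin n → F) : F[X] :=
  X ^ n + ∑ i : Fin n, C (a i) * X ^ (i : ℕ)

variable {F}

lemma psiF_coeff_lt (n : ℕ) (a : Fin n → F) (j : ℕ) (hj : j < n) :
    (psiF F n a).coeff j = a ⟨j, hj⟩ := by
  rw [psiF, coeff_add, coeff_X_pow, if_neg (by omega), finset_sum_coeff]
  simp only [coeff_C_mul, coeff_X_pow]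
  rw [Finset.sum_eq_single (⟨j, hj⟩ : Fin n)]
  · simp
  · intro b _ hb
    rw [if_neg, mul_zero]
    intro h; apply hb; exact Fin.ext h.symm
  · simp

lemma psiF_coeff_ge (n : ℕ) (a : Fin n → F) (j : ℕ) (hj : n ≤ j) :
    (psiF F n a).coeff j = if j = n then 1 else 0 := by
  rw [psiF, coeff_add, coeff_X_pow, finset_sum_coeff]
  simp only [coeff_C_mul, coeff_X_pow]
  rw [Finset.sum_eq_zero fun b _ => by rw [if_neg (by omega), mul_zero]]
  by_cases h : j = n <;> simp [h]

lemma psiF_degree_sum_lt (n : ℕ) (hn : 0 < n) (a : Fin n → F) :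
    (∑ i : Fin n, C (a i) * X ^ (i : ℕ)).degree < (n : WithBot ℕ) := by
  apply lt_of_le_of_lt (degree_sum_le _ _)
  rw [Finset.sup_lt_iff (by exact_mod_cast WithBot.bot_lt_coe _)]
  intro i _
  exact lt_of_le_of_lt (degree_C_mul_X_pow_le _ _) (by exact_mod_cast Nat.cast_lt.mpr i.2)

lemma psiF_monic (n : ℕ) (a : Fin n → F) : (psiF F n a).Monic := by
  rcases Nat.eq_zero_or_pos n with h | h
  · subst h; simp [psiF, Monic, leadingCoeff]
  · exact monic_X_pow_add (psiF_degree_sum_lt n h a)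

lemma psiF_natDegree (n : ℕ) (a : Fin n → F) : (psiF F n a).natDegree = n := by
  have h1 : (psiF F n a).coeff n = 1 := by rw [psiF_coeff_ge n a n le_rfl, if_pos rfl]
  have hne : psiF F n a ≠ 0 := fun h => by simp [h] at h1
  apply le_antisymm
  · rw [natDegree_le_iff_coeff_eq_zero]
    intro j hj
    rw [psiF_coeff_ge n a j hj.le, if_neg hj.ne']
  · exact le_natDegree_of_ne_zero (h1 ▸ one_ne_zero)

lemma psiF_injective (n : ℕ) : Function.Injective (psiF F n) := by
  intro a b h
  funext i
  have := congrArg (fun p => Polynomial.coeff p i) h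
  simpa [psiF_coeff_lt n _ i.1 i.2] using this

variable (F) in
/-- The finset of monic polynomials of degree `n`. -/
noncomputable def Mnf (n : ℕ) : Finset F[X] :=
  (Finset.univ : Finset (Fin n → F)).image (psiF F n)

lemma mem_Mnf {n : ℕ} {f : F[X]} : f ∈ Mnf F n ↔ f.Monic ∧ f.natDegree = n := by
  constructor
  · rintro hf
    obtain ⟨a, -, rfl⟩ := Finset.mem_image.mp hf
    exact ⟨psiF_monic n a, psiF_natDegree n a⟩
  · rintro ⟨hm, hd⟩
    apply Finset.mem_image.mpr
    refine ⟨fun i => f.coeff i, Finset.mem_univ _, ?_⟩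
    ext j
    rcases lt_or_ge j n with hj | hj
    · rw [psiF_coeff_lt n _ j hj]
    · rw [psiF_coeff_ge n _ j hj]
      by_cases h : j = n
      · subst h; simp [← hd, hm.coeff_natDegree]
      · rw [if_neg h]
        exact (coeff_eq_zero_of_natDegree_lt (by omega)).symm

lemma card_Mnf_filter_coeff (n : ℕ) (hn : 0 < n) (c : F) [DecidablePred fun f : F[X] => f.coeff 0 = c] :
    ((Mnf F n).filter (fun f => f.coeff 0 = c)).card = Fintype.card F ^ (n - 1) := by
  classical
  obtain ⟨m, rfl⟩ := Nat.exists_eq_succ_of_ne_zero hn.ne'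
  rw [Mnf, Finset.filter_image, Finset.card_image_of_injective _ (psiF_injective _)]
  have : (Finset.univ.filter fun a : Fin (m+1) → F => (psiF F (m+1) a).coeff 0 = c)
      = Finset.univ.filter fun a : Fin (m+1) → F => a 0 = c := by
    apply Finset.filter_congr
    intro a _
    rw [psiF_coeff_lt (m+1) a 0 (Nat.succ_pos m)]
    rfl
  rw [this]
  have : (Finset.univ.filter fun a : Fin (m+1) → F => a 0 = c)
      = Finset.univ.image (fun t : Fin m → F => (Fin.cons c t : Fin (m+1) → F)) := by
    ext a
    simp only [Finset.mem_filter, Finset.mem_univ, true_and, Finset.mem_image]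
    constructor
    · intro h
      exact ⟨Fin.tail a, by rw [← h, Fin.cons_self_tail]⟩
    · rintro ⟨t, rfl⟩
      simp
  have hinj : Function.Injective (fun t : Fin m → F => (Fin.cons c t : Fin (m+1) → F)) := by
    intro t1 t2 h
    funext i
    have h2 := congrFun h i.succ
    simpa using h2
  rw [this, Finset.card_image_of_injective _ hinj]
  simp [Fintype.card_fun]

lemma Mnf_zero : Mnf F 0 = {1} := by
  ext f
  rw [mem_Mnf]
  simp only [Finset.mem_singleton]
  constructor
  · rintro ⟨hm, hd⟩; exact hm.natDegree_eq_zero.mp hd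
  · rintro rfl; exact ⟨monic_one, natDegree_one⟩


/-- Existence of squarefree decomposition `f = h^2 * g`. -/
lemma exists_sq_mul_squarefree (f : F[X]) (hf : f.Monic) :
    ∃ h g : F[X], h.Monic ∧ g.Monic ∧ Squarefree g ∧ f = h ^ 2 * g := by
  suffices H : ∀ n (f : F[X]), f.Monic → f.natDegree = n →
      ∃ h g : F[X], h.Monic ∧ g.Monic ∧ Squarefree g ∧ f = h ^ 2 * g from H _ f hf rfl
  clear hf f
  intro n
  induction n using Nat.strong_induction_on with
  | _ n ih =>
  intro f hf hn
  subst hn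
  by_cases hsf : Squarefree f
  · exact ⟨1, f, monic_one, hf, hsf, by ring⟩
  · rw [Squarefree] at hsf
    push_neg at hsf
    obtain ⟨x, hxd, hxu⟩ := hsf
    have hx0 : x ≠ 0 := by
      rintro rfl
      rw [zero_mul, zero_dvd_iff] at hxd
      exact hf.ne_zero hxd
    set x' := x * C x.leadingCoeff⁻¹ with hx'
    have hx'm : x'.Monic := monic_mul_leadingCoeff_inv hx0
    have hassoc : Associated x x' :=
      associated_mul_unit_right x _
        (isUnit_C.mpr (IsUnit.mk0 _ (inv_ne_zero (leadingCoeff_ne_zero.mpr hx0))))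
    have hx'd : x' * x' ∣ f := ((hassoc.mul_mul hassoc).dvd_iff_dvd_left).mp hxd
    obtain ⟨g1, hg1⟩ := hx'd
    have hg1m : g1.Monic := (hx'm.mul hx'm).of_mul_monic_left (hg1 ▸ hf)
    have hx'deg : 0 < x'.natDegree := by
      rcases Nat.eq_zero_or_pos x'.natDegree with h | h
      · exfalso
        apply hxu
        have hx1 : x' = 1 := hx'm.natDegree_eq_zero.mp h
        exact hassoc.symm.isUnit (hx1 ▸ isUnit_one)
      · exact h
    have hdeg : g1.natDegree < f.natDegree := by
      have := hg1 ▸ ((hx'm.mul hx'm).natDegree_mul hg1m)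
      have h2 : (x' * x').natDegree = 2 * x'.natDegree := by
        rw [hx'm.natDegree_mul hx'm]; ring
      omega
    obtain ⟨h, g, hhm, hgm, hgsf, hfac⟩ := ih g1.natDegree hdeg g1 hg1m rfl
    exact ⟨x' * h, g, hx'm.mul hhm, hgm, hgsf, by rw [hg1, hfac]; ring⟩

/-- Uniqueness of squarefree decomposition. -/
lemma sq_mul_squarefree_unique :
    ∀ N (h₁ h₂ g₁ g₂ : F[X]), h₁.natDegree ≤ N → h₁.Monic → h₂.Monic → g₁.Monic → g₂.Monic →
      Squarefree g₁ → Squarefree g₂ → h₁ ^ 2 * g₁ = h₂ ^ 2 * g₂ → h₁ = h₂ ∧ g₁ = g₂ := by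
  intro N
  induction N with
  | zero =>
    intro h₁ h₂ g₁ g₂ hd hm₁ hm₂ hgm₁ hgm₂ hsf₁ hsf₂ heq
    have h₁1 : h₁ = 1 := hm₁.natDegree_eq_zero.mp (Nat.le_zero.mp hd)
    subst h₁1
    rw [one_pow, one_mul] at heq
    have : h₂ ^ 2 ∣ g₁ := ⟨g₂, heq⟩
    have : IsUnit h₂ := by
      have := hsf₁ h₂ (by rwa [← sq])
      exact this
    have h₂1 : h₂ = 1 := hm₂.eq_one_of_isUnit this
    subst h₂1
    rw [one_pow, one_mul] at heq
    exact ⟨rfl, heq⟩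
  | succ N ihN =>
    intro h₁ h₂ g₁ g₂ hd hm₁ hm₂ hgm₁ hgm₂ hsf₁ hsf₂ heq
    rcases Nat.eq_zero_or_pos h₁.natDegree with h0 | hpos
    · exact ihN h₁ h₂ g₁ g₂ (by omega) hm₁ hm₂ hgm₁ hgm₂ hsf₁ hsf₂ heq
    -- h₁ has a monic irreducible factor p
    obtain ⟨p, hpm, hpirr, hpd⟩ := h₁.exists_monic_irreducible_factor
      (not_isUnit_of_natDegree_pos h₁ hpos)
    have hpprime : Prime p := hpirr.prime
    -- p divides h₂
    have hpd₂ : p ∣ h₂ := by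
      by_contra hnd
      have hsq : p ^ 2 ∣ h₂ ^ 2 * g₂ := by
        rw [← heq]
        exact dvd_mul_of_dvd_left (pow_dvd_pow_of_dvd hpd 2) g₁
      have hpg : p ∣ g₂ := by
        rcases (hpprime.dvd_mul.mp (dvd_trans (dvd_pow_self p two_ne_zero) hsq)) with h | h
        · exact absurd (hpprime.dvd_of_dvd_pow h) hnd
        · exact h
      obtain ⟨g', hg'⟩ := hpg
      have : p ^ 2 ∣ p * (h₂ ^ 2 * g') := by
        rw [← mul_assoc, mul_comm p (h₂^2), mul_assoc, ← hg']
        exact hsq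
      have hpg' : p ∣ h₂ ^ 2 * g' := by
        have hp0 : p ≠ 0 := hpprime.ne_zero
        rcases this with ⟨t, ht⟩
        refine ⟨t, mul_left_cancel₀ hp0 ?_⟩
        rw [ht, pow_two, mul_assoc]
      have : p ∣ g' := by
        rcases hpprime.dvd_mul.mp hpg' with h | h
        · exact absurd (hpprime.dvd_of_dvd_pow h) hnd
        · exact h
      obtain ⟨g'', hg''⟩ := this
      have : (p * p) ∣ g₂ := ⟨g'', by rw [hg', hg'', mul_assoc]⟩
      exact absurd (hsf₂ p this) hpirr.not_isUnit
    have hp0 : p ≠ 0 := hpprime.ne_zero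
    obtain ⟨h₁', hh₁⟩ := hpd
    obtain ⟨h₂', hh₂⟩ := hpd₂
    have hm₁' : h₁'.Monic := hpm.of_mul_monic_left (hh₁ ▸ hm₁)
    have hm₂' : h₂'.Monic := hpm.of_mul_monic_left (hh₂ ▸ hm₂)
    have heq' : h₁' ^ 2 * g₁ = h₂' ^ 2 * g₂ := by
      have : p ^ 2 * (h₁' ^ 2 * g₁) = p ^ 2 * (h₂' ^ 2 * g₂) := by
        rw [show p ^ 2 * (h₁' ^ 2 * g₁) = (p * h₁') ^ 2 * g₁ by ring,
            show p ^ 2 * (h₂' ^ 2 * g₂) = (p * h₂') ^ 2 * g₂ by ring, ← hh₁, ← hh₂, heq]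
      exact mul_left_cancel₀ (pow_ne_zero 2 hp0) this
    have hdeg' : h₁'.natDegree ≤ N := by
      have h1 : h₁.natDegree = p.natDegree + h₁'.natDegree := by
        rw [hh₁, hpm.natDegree_mul hm₁']
      have hppos : 0 < p.natDegree := hpirr.natDegree_pos
      omega
    obtain ⟨hh, hg⟩ := ihN h₁' h₂' g₁ g₂ hdeg' hm₁' hm₂' hgm₁ hgm₂ hsf₁ hsf₂ heq'
    exact ⟨by rw [hh₁, hh₂, hh], hg⟩


variable (F) in
/-- Monic squarefree polynomials of degree `n` with constant coefficient `c`. -/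
noncomputable def SFf (n : ℕ) (c : F) : Finset F[X] :=
  (Mnf F n).filter (fun f => Squarefree f ∧ f.coeff 0 = c)

lemma mem_SFf {n : ℕ} {c : F} {f : F[X]} :
    f ∈ SFf F n c ↔ (f.Monic ∧ f.natDegree = n) ∧ Squarefree f ∧ f.coeff 0 = c := by
  rw [SFf, Finset.mem_filter, mem_Mnf]

lemma card_monic_filter_eq_sum (n : ℕ) (hn : 1 ≤ n) (c : F) (hc : c ≠ 0) :
    ((Mnf F n).filter (fun f => f.coeff 0 = c)).card
      = ∑ k ∈ Finset.range (n/2+1), ∑ h ∈ (Mnf F k).filter (fun h => h.coeff 0 ≠ 0),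
          (SFf F (n-2*k) (c * (h.coeff 0)⁻¹^2)).card := by
  classical
  rw [show ∑ k ∈ Finset.range (n/2+1), ∑ h ∈ (Mnf F k).filter (fun h => h.coeff 0 ≠ 0),
          (SFf F (n-2*k) (c * (h.coeff 0)⁻¹^2)).card
      = ((Finset.range (n/2+1)).sigma (fun k =>
          ((Mnf F k).filter (fun h => h.coeff 0 ≠ 0)).sigma (fun h =>
            SFf F (n-2*k) (c * (h.coeff 0)⁻¹^2)))).card by
        rw [Finset.card_sigma]
        exact Finset.sum_congr rfl fun k _ => (Finset.card_sigma _ _).symm]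
  apply Finset.card_bij (fun x _ => x.2.1 ^ 2 * x.2.2) ?_ ?_ ?_ |>.symm
  · -- maps to
    rintro ⟨k, h, g⟩ hmem
    simp only [Finset.mem_sigma, Finset.mem_range, Finset.mem_filter, mem_Mnf, mem_SFf] at hmem
    obtain ⟨hk, ⟨⟨hhm, hhd⟩, hh0⟩, ⟨hgm, hgd⟩, hgsf, hg0⟩ := hmem
    have h2k : 2 * k ≤ n := by omega
    rw [Finset.mem_filter, mem_Mnf]
    refine ⟨⟨(hhm.pow 2).mul hgm, ?_⟩, ?_⟩
    · rw [(hhm.pow 2).natDegree_mul hgm, natDegree_pow, hhd, hgd]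
      omega
    · rw [mul_coeff_zero, pow_two, mul_coeff_zero, hg0, ← pow_two]
      field_simp
  · -- injective
    rintro ⟨k₁, h₁, g₁⟩ hm₁ ⟨k₂, h₂, g₂⟩ hm₂ heq
    simp only [Finset.mem_sigma, Finset.mem_filter, mem_Mnf, mem_SFf] at hm₁ hm₂
    obtain ⟨hk₁, ⟨⟨hm₁h, hd₁h⟩, h₁0⟩, ⟨⟨hm₁g, hd₁g⟩, hsf₁, hc₁⟩⟩ := hm₁
    obtain ⟨hk₂, ⟨⟨hm₂h, hd₂h⟩, h₂0⟩, ⟨⟨hm₂g, hd₂g⟩, hsf₂, hc₂⟩⟩ := hm₂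
    obtain ⟨hh, hg⟩ := sq_mul_squarefree_unique h₁.natDegree h₁ h₂ g₁ g₂ le_rfl
      hm₁h hm₂h hm₁g hm₂g hsf₁ hsf₂ heq
    have : k₁ = k₂ := by rw [← hd₁h, ← hd₂h, hh]
    subst this; subst hh; subst hg
    rfl
  · -- surjective
    rintro f hf
    rw [Finset.mem_filter, mem_Mnf] at hf
    obtain ⟨⟨hfm, hfd⟩, hf0⟩ := hf
    obtain ⟨h, g, hhm, hgm, hgsf, hfac⟩ := exists_sq_mul_squarefree f hfm
    have hdeg : n = 2 * h.natDegree + g.natDegree := by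
      rw [← hfd, hfac, (hhm.pow 2).natDegree_mul hgm, natDegree_pow]
    have hc0 : (h.coeff 0) ^ 2 * g.coeff 0 = c := by
      rw [← hf0, hfac, mul_coeff_zero]
      congr 1
      rw [pow_two, pow_two, mul_coeff_zero]
    have hh0 : h.coeff 0 ≠ 0 := by
      intro h0
      rw [h0] at hc0
      simp at hc0
      exact hc (hc0 ▸ rfl)
    refine ⟨⟨h.natDegree, h, g⟩, ?_, hfac.symm⟩
    simp only [Finset.mem_sigma, Finset.mem_range, Finset.mem_filter, mem_Mnf, mem_SFf]
    refine ⟨by omega, ⟨⟨hhm, trivial⟩, hh0⟩, ⟨⟨hgm, by omega⟩, hgsf, ?_⟩⟩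
    rw [← hc0, mul_comm ((h.coeff 0)^2) (g.coeff 0), mul_assoc, ← mul_pow,
      mul_inv_cancel₀ hh0, one_pow, mul_one]


variable (F) in
/-- Number of monic squarefree polynomials of degree `m` with constant coefficient `c`. -/
noncomputable def Ncount (m : ℕ) (c : F) : ℕ := (SFf F m c).card

variable (F) in
noncomputable def Rcount (m : ℕ) (c : F) : ℕ :=
  ∑ d ∈ Finset.univ.erase (0:F), Ncount F m (c * (d⁻¹)^2)

variable (F) in
noncomputable def Scount (n : ℕ) (c : F) : ℕ :=
  ∑ k ∈ Finset.range (n/2), (Fintype.card F)^k * Rcount F (n - 2*k - 2) c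

lemma Rcount_invariant (m : ℕ) (c : F) (d : F) (hd : d ≠ 0) :
    Rcount F m (c * (d⁻¹)^2) = Rcount F m c := by
  rw [Rcount, Rcount]
  apply Finset.sum_nbij' (fun e => d * e) (fun e => d⁻¹ * e)
  · intro e he
    rw [Finset.mem_erase] at he ⊢
    exact ⟨mul_ne_zero hd he.1, Finset.mem_univ _⟩
  · intro e he
    rw [Finset.mem_erase] at he ⊢
    exact ⟨mul_ne_zero (inv_ne_zero hd) he.1, Finset.mem_univ _⟩
  · intro e _
    rw [← mul_assoc, inv_mul_cancel₀ hd, one_mul]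
  · intro e _
    rw [← mul_assoc, mul_inv_cancel₀ hd, one_mul]
  · intro e _
    congr 1
    rw [mul_inv, mul_pow, mul_assoc, mul_comm ((d⁻¹)^2) ((e⁻¹)^2), ← mul_assoc, mul_assoc]

lemma Scount_invariant (n : ℕ) (c : F) (d : F) (hd : d ≠ 0) :
    Scount F n (c * (d⁻¹)^2) = Scount F n c := by
  rw [Scount, Scount]
  exact Finset.sum_congr rfl fun k _ => by rw [Rcount_invariant _ _ _ hd]

/-- The master counting identity (A). -/
lemma identity_A (n : ℕ) (hn : 1 ≤ n) (c : F) (hc : c ≠ 0) :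
    (Fintype.card F)^(n-1) = Ncount F n c + Scount F n c := by
  classical
  rw [← card_Mnf_filter_coeff n hn c, card_monic_filter_eq_sum n hn c hc,
    Finset.sum_range_succ', add_comm (Ncount F n c)]
  congr 1
  · -- the k ≥ 1 part equals Scount
    rw [Scount]
    apply Finset.sum_congr rfl
    intro k hk
    have hidx : n - 2*(k+1) = n - 2*k - 2 := by omega
    rw [hidx]
    rw [← Finset.sum_fiberwise_of_maps_to'
        (t := (Finset.univ.erase (0:F))) (g := fun h : F[X] => h.coeff 0)
        (fun h hh => by
          rw [Finset.mem_filter] at hh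
          exact Finset.mem_erase.mpr ⟨hh.2, Finset.mem_univ _⟩)
        (fun d => (SFf F (n - 2*k - 2) (c * d⁻¹^2)).card)]
    rw [Rcount, Finset.mul_sum]
    apply Finset.sum_congr rfl
    intro j hj
    rw [Finset.mem_erase] at hj
    rw [Finset.sum_const, smul_eq_mul]
    congr 1
    rw [Finset.filter_filter]
    rw [show (Finset.filter (fun h : F[X] => h.coeff 0 ≠ 0 ∧ h.coeff 0 = j) (Mnf F (k+1)))
        = (Mnf F (k+1)).filter (fun h => h.coeff 0 = j) from
      Finset.filter_congr fun h _ =>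
        ⟨fun ⟨_, h2⟩ => h2, fun h2 => ⟨h2 ▸ hj.1, h2⟩⟩]
    rw [card_Mnf_filter_coeff (k+1) (by omega) j, Nat.add_sub_cancel]
  · -- the k = 0 term equals Ncount
    rw [Mnf_zero]
    rw [show ({1} : Finset F[X]).filter (fun h => h.coeff 0 ≠ 0) = {1} by
      rw [Finset.filter_singleton, if_pos (by simp only [coeff_one_zero]; exact one_ne_zero)]]
    rw [Finset.sum_singleton, Ncount]
    simp

/-- Identity (B), obtained by summing (A) over a square class. -/
lemma identity_B (n : ℕ) (hn : 1 ≤ n) (c : F) (hc : c ≠ 0) :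
    (Fintype.card F - 1) * (Fintype.card F)^(n-1)
      = Rcount F n c + (Fintype.card F - 1) * Scount F n c := by
  have hcard : (Finset.univ.erase (0:F)).card = Fintype.card F - 1 := by
    rw [Finset.card_erase_of_mem (Finset.mem_univ _), Finset.card_univ]
  have key : ∑ d ∈ Finset.univ.erase (0:F), (Fintype.card F)^(n-1)
      = ∑ d ∈ Finset.univ.erase (0:F), (Ncount F n (c * (d⁻¹)^2) + Scount F n c) := by
    apply Finset.sum_congr rfl
    intro d hd
    rw [Finset.mem_erase] at hd
    rw [← Scount_invariant n c d hd.1]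
    exact identity_A n hn _ (mul_ne_zero hc (pow_ne_zero _ (inv_ne_zero hd.1)))
  rw [Finset.sum_const, hcard, smul_eq_mul] at key
  rw [key, Finset.sum_add_distrib, Finset.sum_const, hcard, smul_eq_mul, Rcount]

lemma Scount_rec (l : ℕ) (c : F) :
    Scount F (l+2) c = Rcount F l c + Fintype.card F * Scount F l c := by
  rw [Scount, Scount, show (l+2)/2 = l/2 + 1 from Nat.add_div_right l zero_lt_two,
    Finset.sum_range_succ', add_comm (Rcount F l c)]
  congr 1
  · rw [Finset.mul_sum]
    apply Finset.sum_congr rfl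
    intro k _
    rw [show l + 2 - 2*(k+1) - 2 = l - 2*k - 2 by omega, pow_succ]
    ring
  · rw [pow_zero, one_mul, show l + 2 - 2*0 - 2 = l by omega]

lemma Rcount_zero_one (hodd : Odd (Fintype.card F)) : Rcount F 0 (1 : F) = 2 := by
  classical
  have hchar : ringChar F ≠ 2 := by
    intro h
    have h2 := FiniteField.even_card_iff_char_two.mp h
    have h3 := Nat.odd_iff.mp hodd
    omega
  have hne : (-1 : F) ≠ 1 := Ring.neg_one_ne_one_of_char_ne_two hchar
  have hN : ∀ c : F, Ncount F 0 c = if c = 1 then 1 else 0 := by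
    intro c
    rw [Ncount, SFf, Mnf_zero, Finset.filter_singleton]
    by_cases h : c = 1
    · rw [if_pos ⟨squarefree_one, by rw [coeff_one_zero, h]⟩, if_pos h, Finset.card_singleton]
    · rw [if_neg (fun ⟨_, h2⟩ => h (by rw [coeff_one_zero] at h2; exact h2.symm)), if_neg h,
        Finset.card_empty]
  rw [Rcount]
  rw [Finset.sum_congr rfl (fun d _ => hN _), Finset.sum_boole, Nat.cast_id]
  have hset : (Finset.univ.erase (0:F)).filter (fun d => 1 * (d⁻¹)^2 = 1) = {1, -1} := by
    ext d
    simp only [Finset.mem_filter, Finset.mem_erase, Finset.mem_univ, true_and, and_true, one_mul,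
      Finset.mem_insert, Finset.mem_singleton]
    constructor
    · rintro ⟨hd0, hd⟩
      rcases sq_eq_one_iff.mp hd with h | h
      · left; rw [← inv_inv d, h, inv_one]
      · right; rw [← inv_inv d, h, inv_neg_one]
    · rintro (rfl | rfl)
      · exact ⟨one_ne_zero, by simp⟩
      · exact ⟨neg_ne_zero.mpr one_ne_zero, by simp⟩
  rw [hset, Finset.card_pair (fun h => hne h.symm)]

/-- `Rcount n 1 = (q-1) * Ncount n 1` for `n ≥ 1`. -/
lemma Rcount_eq (n : ℕ) (hn : 1 ≤ n) :
    Rcount F n (1 : F) = (Fintype.card F - 1) * Ncount F n (1 : F) := by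
  have key : ∀ d : F, d ≠ 0 → Ncount F n ((1:F) * (d⁻¹)^2) = Ncount F n 1 := by
    intro d hd
    have h1 := identity_A n hn ((1:F) * (d⁻¹)^2)
      (mul_ne_zero one_ne_zero (pow_ne_zero _ (inv_ne_zero hd)))
    have h2 := identity_A n hn (1:F) one_ne_zero
    rw [Scount_invariant n 1 d hd] at h1
    omega
  rw [Rcount, Finset.sum_congr rfl (fun d hd => key d (Finset.mem_erase.mp hd).1),
    Finset.sum_const, Finset.card_erase_of_mem (Finset.mem_univ _), Finset.card_univ,
    smul_eq_mul]

lemma Rcount_closed (hodd : Odd (Fintype.card F)) (m : ℕ) :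
    ((Fintype.card F : ℤ) + 1) * (Rcount F (2*m+2) (1:F) : ℤ)
      = ((Fintype.card F : ℤ) - 1)
          * ((Fintype.card F : ℤ)^(2*m+2) - (Fintype.card F : ℤ) - 2) := by
  have hq1 : 1 ≤ Fintype.card F := Fintype.card_pos
  have hB : ∀ n : ℕ, 1 ≤ n → ((Fintype.card F : ℤ) - 1) * (Fintype.card F : ℤ)^(n-1)
      = (Rcount F n (1:F) : ℤ)
          + ((Fintype.card F : ℤ) - 1) * (Scount F n (1:F) : ℤ) := by
    intro n hn
    have h := identity_B n hn (1:F) one_ne_zero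
    zify [hq1] at h
    exact h
  induction m with
  | zero =>
    have hS2 : Scount F 2 (1:F) = 2 := by
      rw [Scount]
      simp [Rcount_zero_one hodd]
    have h2 := hB 2 (by omega)
    rw [hS2] at h2
    norm_num at h2
    linear_combination (-(((Fintype.card F : ℤ)) + 1)) * h2
  | succ m ih =>
    have h4 := hB (2*m+4) (by omega)
    have h2 := hB (2*m+2) (by omega)
    have hS := Scount_rec (2*m+2) (1:F)
    rw [show 2*m+2+2 = 2*m+4 by ring] at hS
    have hS' : (Scount F (2*m+4) (1:F) : ℤ)
        = (Rcount F (2*m+2) (1:F) : ℤ)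
          + (Fintype.card F : ℤ) * (Scount F (2*m+2) (1:F) : ℤ) := by
      exact_mod_cast congrArg (Nat.cast : ℕ → ℤ) hS
    rw [show 2*m+4-1 = 2*m+3 by omega] at h4
    rw [show 2*m+2-1 = 2*m+1 by omega] at h2
    rw [show 2*(m+1)+2 = 2*m+4 by ring]
    set Q := (Fintype.card F : ℤ) with hQ
    linear_combination (-(Q+1)) * h4 + (-(Q+1)*(Q-1)) * hS' + (Q*(Q+1)) * h2 + ih

end

/-- For `q` odd and `n ≥ 2` even, the number of monic squarefree polynomials
of degree `n` over `F_q` with constant term `1` equals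
`(q^(n+1) - q^n - (q-1))/(q² - 1) - 1`. -/
theorem regular_semisimple_classes_SL_odd_char_even_n (q n : ℕ) (hn : 2 ≤ n)
    (hne : Even n) (hq2 : Odd q) (F : Type*) [Field F] [Fintype F]
    (hq : Fintype.card F = q) :
    (({p : Polynomial F | p.Monic ∧ Squarefree p ∧ p.natDegree = n ∧ p.coeff 0 = 1}.ncard : ℤ)
        + 1) * ((q : ℤ) ^ 2 - 1)
      = (q : ℤ) ^ (n + 1) - (q : ℤ) ^ n - ((q : ℤ) - 1) := by
  classical
  subst hq
  have hq1 : 1 ≤ Fintype.card F := Fintype.card_pos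
  have hset : {p : Polynomial F | p.Monic ∧ Squarefree p ∧ p.natDegree = n ∧ p.coeff 0 = 1}
      = ↑(SFf F n 1) := by
    ext p
    simp only [Set.mem_setOf_eq, Finset.coe_filter, SFf, Set.mem_setOf_eq, Finset.mem_coe,
      Finset.mem_filter, mem_Mnf]
    tauto
  rw [hset, Set.ncard_coe_finset]
  obtain ⟨t, ht⟩ := hne
  have hn2 : n = 2*(t-1)+2 := by omega
  have hC := Rcount_closed (F := F) hq2 (t-1)
  rw [← hn2] at hC
  have hR := Rcount_eq (F := F) n (by omega)
  zify [hq1] at hR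
  rw [show (SFf F n 1).card = Ncount F n 1 from rfl, pow_succ]
  set Q := ((Fintype.card F : ℤ)) with hQ
  linear_combination (-(Q+1)) * hR + hC
end

section
/- The number of monic squarefree self-conjugate polynomials of degree n over F_{q^2} with nonzero constant term equals (q+1)·[q^{n+1} - q^n + (-1)^{n+1}(-1)^{⌊n/2⌋}(q - (-1)^n)]/(q^2 + 1). -/
/-!
Write `M n` and `A n` for the numbers of monic self-conjugate, resp. squarefree self-conjugate,
polynomials of degree `n` with nonzero constant term. A monic `φ` factors uniquely as `s * g ^ 2`
with `s` squarefree and `s`, `g` monic; conjugation is multiplicative, so for self-conjugate `φ`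
uniqueness forces `s` and `g` to be self-conjugate, and `M n = ∑_{2k ≤ n} A (n - 2k) * M k`.

Self-conjugacy of `φ = ∑ c_j t ^ j` of degree `n` reads `c_{n-j} = c_0 * c_j ^ q`. So `φ` is a
constant term `c_0` of norm `c_0 ^ (q + 1) = 1` (`q + 1` choices) together with a palindrome
`c_1, …, c_{n-1}` twisted by the involution `z ↦ c_0 * z ^ q`, which has `q` fixed points by
Hilbert 90; hence `M (n + 1) = (q + 1) * q ^ n`. Comparing the convolution at `n + 2` and `n`
gives `A (n + 2) + A n = M (n + 2) - q * M n`, and this recurrence solves to the closed form.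
-/

open Function

namespace Fin

variable {α : Type*} {n : ℕ}

lemma cons_snoc_init_tail (c : Fin (n + 2) → α) :
    cons (c 0) (snoc (init (tail c)) (c (last _))) = c := by
  conv_rhs => rw [← cons_self_tail c, ← snoc_init_self (tail c)]
  rfl

lemma cons_snoc_comp_rev_eq_comp_iff {g : α → α} {x y : α} {d : Fin n → α} :
    (cons x (snoc d y) : Fin (n + 2) → α) ∘ rev = g ∘ cons x (snoc d y) ↔
      y = g x ∧ d ∘ rev = g ∘ d ∧ x = g y := by
  rw [cons_comp_rev, snoc_comp_rev, comp_cons, comp_snoc, cons_snoc_eq_snoc_cons, snoc_inj,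
    cons_inj]
  tauto

lemma comp_rev_eq_comp_iff {g : α → α} {c : Fin (n + 2) → α} :
    c ∘ rev = g ∘ c ↔ c (last _) = g (c 0) ∧ init (tail c) ∘ rev = g ∘ init (tail c) ∧
      c 0 = g (c (last _)) := by
  conv_lhs => rw [← cons_snoc_init_tail c]
  exact cons_snoc_comp_rev_eq_comp_iff

end Fin

def twistedPalindromes {α : Type*} (g : α → α) (n : ℕ) : Set (Fin n → α) :=
  {c | c ∘ Fin.rev = g ∘ c}

section

variable {α : Type*} {g : α → α}

def twistedPalindromesSuccSuccEquiv (hg : Involutive g) (n : ℕ) :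
    twistedPalindromes g (n + 2) ≃ α × twistedPalindromes g n where
  toFun c := (c.1 0, ⟨Fin.init (Fin.tail c.1), (Fin.comp_rev_eq_comp_iff.1 c.2).2.1⟩)
  invFun xd := ⟨Fin.cons xd.1 (Fin.snoc xd.2.1 (g xd.1)),
    Fin.cons_snoc_comp_rev_eq_comp_iff.2 ⟨rfl, xd.2.2, (hg _).symm⟩⟩
  left_inv c := by
    ext1
    conv_rhs => rw [← Fin.cons_snoc_init_tail c.1, (Fin.comp_rev_eq_comp_iff.1 c.2).1]
  right_inv xd := by simp

def twistedPalindromesOneEquiv : twistedPalindromes g 1 ≃ fixedPoints g :=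
  (Equiv.funUnique (Fin 1) α).subtypeEquiv fun c ↦ by
    simp only [twistedPalindromes, Set.mem_ofPred_eq, funext_iff, comp_apply, Fin.forall_fin_one,
      Fin.rev_zero, Fin.last_zero, Equiv.funUnique_apply, Fin.default_eq_zero, mem_fixedPoints,
      IsFixedPt]
    exact eq_comm

theorem card_twistedPalindromes [Finite α] (hg : Involutive g) (n : ℕ) :
    Nat.card (twistedPalindromes g n) =
      Nat.card α ^ (n / 2) * Nat.card (fixedPoints g) ^ (n % 2) := by
  induction n using Nat.twoStepInduction with
  | zero => simp [twistedPalindromes, funext_iff]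
  | one => simp [Nat.card_congr twistedPalindromesOneEquiv]
  | more n ih _ =>
    rw [Nat.card_congr (twistedPalindromesSuccSuccEquiv hg n), Nat.card_prod, ih,
      Nat.add_div_right _ two_pos, Nat.add_mod_right, pow_succ]
    ring

end

namespace FiniteField

variable {F : Type*} [Field F] [Fintype F] {q : ℕ}

lemma two_le_of_card_eq_sq (hF : Fintype.card F = q ^ 2) : 2 ≤ q := by
  have := Fintype.one_lt_card (α := F)
  by_contra! h
  interval_cases q <;> simp_all

lemma natCard_units_of_card_eq_sq (hF : Fintype.card F = q ^ 2) :
    Nat.card Fˣ = (q + 1) * (q - 1) := by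
  classical
  rw [Nat.card_eq_fintype_card, Fintype.card_units, hF, ← Nat.sq_sub_sq, one_pow]

lemma card_rootsOfUnity_of_card_eq_sq (hF : Fintype.card F = q ^ 2) :
    Nat.card (rootsOfUnity (q + 1) F) = q + 1 := by
  rw [rootsOfUnity_eq_ker, IsCyclic.card_powMonoidHom_ker, natCard_units_of_card_eq_sq hF,
    Nat.gcd_eq_right (dvd_mul_right _ _)]

/-- Hilbert's Theorem 90 for the quadratic extension `F / 𝔽_q`. -/
lemma exists_pow_sub_one_eq (hF : Fintype.card F = q ^ 2) {u : Fˣ} (hu : u ^ (q + 1) = 1) :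
    ∃ w : Fˣ, w ^ (q - 1) = u := by
  have hq := two_le_of_card_eq_sq hF
  have hrange : (powMonoidHom (q - 1) : Fˣ →* Fˣ).range = rootsOfUnity (q + 1) F := by
    refine Subgroup.eq_of_le_of_card_ge ?_ ?_
    · rintro _ ⟨w, rfl⟩
      rw [mem_rootsOfUnity, powMonoidHom_apply, ← pow_mul, mul_comm,
        ← natCard_units_of_card_eq_sq hF, pow_card_eq_one']
    · rw [card_rootsOfUnity_of_card_eq_sq hF, IsCyclic.card_powMonoidHom_range,
        natCard_units_of_card_eq_sq hF, Nat.gcd_eq_right (dvd_mul_left _ _),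
        Nat.mul_div_cancel _ (by omega)]
  exact MonoidHom.mem_range.1 (hrange ▸ (mem_rootsOfUnity _ u).2 hu)

lemma card_fixedPoints_mul_pow (hF : Fintype.card F = q ^ 2) {a : F} (ha : a ^ (q + 1) = 1) :
    Nat.card (fixedPoints fun z : F ↦ a * z ^ q) = q := by
  classical
  have hq := two_le_of_card_eq_sq hF
  have ha0 : a ≠ 0 := by rintro rfl; simp at ha
  set f : Fˣ →* Fˣ := powMonoidHom (q - 1)
  obtain ⟨w, hw⟩ := exists_pow_sub_one_eq hF (u := (Units.mk0 a ha0)⁻¹)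
    (by rw [inv_pow, inv_eq_one]; ext; simpa using ha)
  -- the nonzero fixed points solve `z ^ (q - 1) = a⁻¹`, a coset of the kernel of `f`
  have hfix : fixedPoints (fun z : F ↦ a * z ^ q) = insert 0 (Units.val '' (f ⁻¹' {f w})) := by
    ext z
    rcases eq_or_ne z 0 with rfl | hz
    · simp only [mem_fixedPoints, IsFixedPt, mul_eq_zero, pow_eq_zero_iff', ne_eq, true_and,
        Set.mem_insert_iff, true_or, iff_true]
      omega
    lift z to Fˣ using hz.isUnit
    have hq1 : q = q - 1 + 1 := by omega
    simp only [mem_fixedPoints, IsFixedPt, Set.mem_insert_iff, Units.ne_zero, false_or,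
      Set.mem_image, Set.mem_preimage, Set.mem_singleton_iff, Units.val_inj, exists_eq_right]
    rw [show f w = (Units.mk0 a ha0)⁻¹ from hw, eq_inv_iff_mul_eq_one, hq1, pow_succ, ← mul_assoc]
    rw [mul_eq_right₀ hz, ← Units.val_inj]
    simp [f, mul_comm]
  rw [hfix, Nat.card_coe_set_eq, Set.ncard_insert_of_notMem (by simp),
    Set.ncard_image_of_injective _ Units.val_injective, ← Nat.card_coe_set_eq,
    Nat.card_congr (f.fiberEquivKer w), IsCyclic.card_powMonoidHom_ker,
    natCard_units_of_card_eq_sq hF, Nat.gcd_eq_right (dvd_mul_left _ _)]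
  omega

end FiniteField

namespace UniqueFactorizationMonoid

variable {R : Type*} [CommMonoidWithZero R] [UniqueFactorizationMonoid R]

theorem exists_squarefree_mul_sq {x : R} (hx : x ≠ 0) :
    ∃ s g : R, Squarefree s ∧ s * g ^ 2 = x := by
  induction x using WfDvdMonoid.induction_on_irreducible with
  | zero => contradiction
  | unit u hu => exact ⟨u, 1, hu.squarefree, by simp⟩
  | mul z p hz hp ih =>
    obtain ⟨s, g, hs, rfl⟩ := ih hz
    by_cases hps : p ∣ s
    · obtain ⟨t, rfl⟩ := hps
      exact ⟨t, p * g, hs.of_mul_right, by simp only [sq]; ac_rfl⟩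
    · exact ⟨p * s, g, squarefree_mul_iff.2 ⟨hp.isRelPrime_iff_not_dvd.2 hps, hp.squarefree, hs⟩,
        mul_assoc _ _ _⟩

/-- The factor `g` is recovered from `s * g ^ 2` by halving every multiplicity, since the
multiplicities in `s` are at most one. -/
theorem associated_of_squarefree_mul_sq_eq [NormalizationMonoid R] {s₁ s₂ g₁ g₂ : R}
    (hs₁ : Squarefree s₁) (hs₂ : Squarefree s₂) (hg₁ : g₁ ≠ 0) (hg₂ : g₂ ≠ 0)
    (h : s₁ * g₁ ^ 2 = s₂ * g₂ ^ 2) : Associated g₁ g₂ := by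
  classical
  have := nontrivial_of_ne g₁ 0 hg₁
  rw [associated_iff_normalizedFactors_eq_normalizedFactors hg₁ hg₂]
  ext π
  have hcount := congrArg (fun x ↦ (normalizedFactors x).count π) h
  simp only [normalizedFactors_mul hs₁.ne_zero (pow_ne_zero 2 hg₁),
    normalizedFactors_mul hs₂.ne_zero (pow_ne_zero 2 hg₂), normalizedFactors_pow,
    Multiset.count_add, Multiset.count_nsmul] at hcount
  have h₁ := Multiset.nodup_iff_count_le_one.1
    ((squarefree_iff_nodup_normalizedFactors hs₁.ne_zero).1 hs₁) π
  have h₂ := Multiset.nodup_iff_count_le_one.1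
    ((squarefree_iff_nodup_normalizedFactors hs₂.ne_zero).1 hs₂) π
  omega

end UniqueFactorizationMonoid

lemma Finset.sum_range_div_two_succ_sub {R : Type*} [CommRing R] (A M : ℕ → R) {q : R}
    (hM : ∀ k, M (k + 2) = q * M (k + 1)) (n : ℕ) :
    ∑ k ∈ range ((n + 2) / 2 + 1), A (n + 2 - 2 * k) * M k
        - q * ∑ k ∈ range (n / 2 + 1), A (n - 2 * k) * M k
      = A (n + 2) * M 0 + A n * (M 1 - q * M 0) := by
  have hshift : ∑ k ∈ range (n / 2), A (n + 2 - 2 * (k + 1 + 1)) * M (k + 1 + 1)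
      = q * ∑ k ∈ range (n / 2), A (n - 2 * (k + 1)) * M (k + 1) := by
    rw [mul_sum]
    refine sum_congr rfl fun k _ ↦ ?_
    rw [hM, show n + 2 - 2 * (k + 1 + 1) = n - 2 * (k + 1) by omega]
    ring
  rw [show (n + 2) / 2 + 1 = n / 2 + 1 + 1 by omega, sum_range_succ', sum_range_succ',
    sum_range_succ', hshift]
  simp only [Nat.sub_zero, mul_zero, zero_add, Nat.add_sub_cancel, mul_one]
  ring

namespace Polynomial

variable {F : Type*} [Field F] {σ : F →+* F}

theorem Monic.exists_squarefree_mul_sq {φ : F[X]} (hφ : φ.Monic) :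
    ∃ s g : F[X], s.Monic ∧ g.Monic ∧ Squarefree s ∧ s * g ^ 2 = φ := by
  obtain ⟨s, g, hs, h⟩ := UniqueFactorizationMonoid.exists_squarefree_mul_sq hφ.ne_zero
  have hg : g ≠ 0 := by rintro rfl; simp [hφ.ne_zero.symm] at h
  have hc : g.leadingCoeff ≠ 0 := leadingCoeff_ne_zero.2 hg
  have h' : s * C (g.leadingCoeff ^ 2) * (g * C g.leadingCoeff⁻¹) ^ 2 = φ := by
    rw [← h, mul_pow, ← C_pow, inv_pow, mul_mul_mul_comm, ← C_mul,
      mul_inv_cancel₀ (pow_ne_zero 2 hc), C_1, mul_one]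
  have hg' := monic_mul_leadingCoeff_inv hg
  exact ⟨_, _, (hg'.pow 2).of_mul_monic_right (h' ▸ hφ), hg',
    (associated_mul_unit_right s _ (isUnit_C.2 (pow_ne_zero 2 hc).isUnit)).squarefree_iff.1 hs, h'⟩

theorem eq_of_squarefree_mul_sq_eq {s₁ s₂ g₁ g₂ : F[X]} (hs₁ : Squarefree s₁)
    (hs₂ : Squarefree s₂) (hg₁ : g₁.Monic) (hg₂ : g₂.Monic) (h : s₁ * g₁ ^ 2 = s₂ * g₂ ^ 2) :
    s₁ = s₂ ∧ g₁ = g₂ := by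
  classical
  have hg : g₁ = g₂ := eq_of_monic_of_associated hg₁ hg₂
    (UniqueFactorizationMonoid.associated_of_squarefree_mul_sq_eq hs₁ hs₂ hg₁.ne_zero
      hg₂.ne_zero h)
  subst hg
  exact ⟨mul_right_cancel₀ (pow_ne_zero 2 hg₁.ne_zero) h, rfl⟩

/-- `reverse` realises `t ^ deg p * p (1 / t)`. When `p.coeff 0 = 0` the value is the junk `0`,
which is what makes `conjugate σ` multiplicative on all of `F[X]`. -/
noncomputable def conjugate (σ : F →+* F) : F[X] →* F[X] where
  toFun p := C (σ (p.coeff 0))⁻¹ * p.reverse.map σ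
  map_one' := by rw [← C_1, reverse_C, coeff_C_zero]; simp
  map_mul' p r := by
    rw [mul_coeff_zero, map_mul, mul_inv, C_mul, reverse_mul_of_domain, Polynomial.map_mul]
    ring

lemma coeff_conjugate (p : F[X]) (j : ℕ) :
    (conjugate σ p).coeff j = (σ (p.coeff 0))⁻¹ * σ (p.coeff (revAt p.natDegree j)) := by
  simp [conjugate, coeff_reverse]

lemma natDegree_conjugate {p : F[X]} (h0 : p.coeff 0 ≠ 0) :
    (conjugate σ p).natDegree = p.natDegree := by
  have : p.natTrailingDegree = 0 := natTrailingDegree_eq_zero.2 (Or.inr h0)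
  simp [conjugate, natDegree_C_mul, h0, reverse_natDegree, this]

lemma monic_conjugate {p : F[X]} (h0 : p.coeff 0 ≠ 0) : (conjugate σ p).Monic := by
  have : p.natTrailingDegree = 0 := natTrailingDegree_eq_zero.2 (Or.inr h0)
  simp [conjugate, Monic, reverse_leadingCoeff, trailingCoeff, this, h0]

lemma conjugate_conjugate (hσ : Involutive σ) {p : F[X]} (h0 : p.coeff 0 ≠ 0) :
    conjugate σ (conjugate σ p) = C p.leadingCoeff⁻¹ * p := by
  ext j
  rw [coeff_conjugate, natDegree_conjugate h0, coeff_conjugate, coeff_conjugate, coeff_C_mul,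
    revAt_invol, revAt_le (Nat.zero_le _), Nat.sub_zero, leadingCoeff]
  simp only [map_mul, map_inv₀, hσ _]
  have : p.coeff p.natDegree ≠ 0 := leadingCoeff_ne_zero.2 fun h ↦ by simp [h] at h0
  field_simp

lemma coeff_zero_conjugate_ne_zero {p : F[X]} (h0 : p.coeff 0 ≠ 0) :
    (conjugate σ p).coeff 0 ≠ 0 := by
  have : p ≠ 0 := fun h ↦ by simp [h] at h0
  simpa [coeff_conjugate, h0] using this

theorem squarefree_conjugate (hσ : Involutive σ) {p : F[X]} (h0 : p.coeff 0 ≠ 0)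
    (hp : Squarefree p) : Squarefree (conjugate σ p) := by
  rintro d ⟨e, he⟩
  have hd0 : d.coeff 0 ≠ 0 := by
    have := coeff_zero_conjugate_ne_zero (σ := σ) h0
    rw [he, mul_coeff_zero, mul_coeff_zero] at this
    exact left_ne_zero_of_mul (left_ne_zero_of_mul this)
  have hp0 : p ≠ 0 := fun h ↦ by simp [h] at h0
  have hd : IsUnit (conjugate σ d) := hp _ <| by
    refine dvd_trans ⟨conjugate σ e, ?_⟩
      ((isUnit_C.2 (inv_ne_zero (leadingCoeff_ne_zero.2 hp0)).isUnit).mul_left_dvd.2 dvd_rfl)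
    rw [← conjugate_conjugate hσ h0, he, map_mul, map_mul]
  have := hd.map (conjugate σ)
  rw [conjugate_conjugate hσ hd0] at this
  exact isUnit_of_mul_isUnit_right this

lemma conjugate_eq_self_iff (hσ : Involutive σ) {p : F[X]} (h0 : p.coeff 0 ≠ 0) :
    conjugate σ p = p ↔
      ∀ j ≤ p.natDegree, p.coeff (p.natDegree - j) = p.coeff 0 * σ (p.coeff j) := by
  have hσ0 : σ (p.coeff 0) ≠ 0 := by simpa using h0
  rw [Polynomial.ext_iff]
  refine ⟨fun h j hj ↦ ?_, fun h j ↦ ?_⟩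
  · have := h j
    rw [coeff_conjugate, revAt_le hj, inv_mul_eq_iff_eq_mul₀ hσ0] at this
    simpa [hσ _] using congrArg σ this
  · rw [coeff_conjugate]
    by_cases hj : j ≤ p.natDegree
    · rw [revAt_le hj, h j hj, map_mul, hσ, inv_mul_cancel_left₀ hσ0]
    · rw [revAt_eq_self_of_lt (by omega), coeff_eq_zero_of_natDegree_lt (n := j) (by omega),
        map_zero, mul_zero]

def selfConjugates (σ : F →+* F) (n : ℕ) : Set F[X] :=
  {p | p.Monic ∧ p.natDegree = n ∧ p.coeff 0 ≠ 0 ∧ conjugate σ p = p}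

def squarefreeSelfConjugates (σ : F →+* F) (n : ℕ) : Set F[X] :=
  {p | p.Monic ∧ Squarefree p ∧ p.natDegree = n ∧ p.coeff 0 ≠ 0 ∧ conjugate σ p = p}

lemma mem_selfConjugates_iff (hσ : Involutive σ) {n : ℕ} {p : F[X]} :
    p ∈ selfConjugates σ n ↔
      p.Monic ∧ p.natDegree = n ∧ ∀ j ≤ n, p.coeff (n - j) = p.coeff 0 * σ (p.coeff j) := by
  refine ⟨fun ⟨hm, hn, h0, hp⟩ ↦ ⟨hm, hn, hn ▸ (conjugate_eq_self_iff hσ h0).1 hp⟩,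
    fun ⟨hm, hn, hp⟩ ↦ ?_⟩
  have h0 : p.coeff 0 ≠ 0 := by
    have := hp 0 (Nat.zero_le n)
    rw [Nat.sub_zero, ← hn, hm.coeff_natDegree] at this
    exact left_ne_zero_of_mul_eq_one this.symm
  exact ⟨hm, hn, h0, (conjugate_eq_self_iff hσ h0).2 (hn ▸ hp)⟩

lemma mem_selfConjugates_succ_iff (hσ : Involutive σ) {n : ℕ} {p : F[X]}
    (hp : p ∈ degreeLT F (n + 2)) :
    p ∈ selfConjugates σ (n + 1) ↔
      p.coeff (n + 1) = 1 ∧ ∀ j : Fin (n + 2), p.coeff (Fin.rev j) = p.coeff 0 * σ (p.coeff j) := by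
  have hdeg : p.natDegree ≤ n + 1 := by
    rw [mem_degreeLT, degree_lt_iff_coeff_zero] at hp
    exact natDegree_le_iff_coeff_eq_zero.2 fun m hm ↦ hp m (by exact_mod_cast hm)
  have hrev : ∀ j : Fin (n + 2), (Fin.rev j : ℕ) = n + 1 - j := fun j ↦ by
    rw [Fin.val_rev]; omega
  rw [mem_selfConjugates_iff hσ]
  constructor
  · rintro ⟨hm, hn, h⟩
    exact ⟨hn ▸ hm.coeff_natDegree, fun j ↦ hrev j ▸ h j (by omega)⟩
  · rintro ⟨h1, h⟩
    have hn : p.natDegree = n + 1 :=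
      le_antisymm hdeg (le_natDegree_of_ne_zero (by rw [h1]; exact one_ne_zero))
    exact ⟨by rw [Monic, leadingCoeff, hn, h1], hn, fun j hj ↦ by
      simpa [hrev] using h ⟨j, by omega⟩⟩

lemma mem_degreeLT_of_mem_selfConjugates {n : ℕ} {p : F[X]} (hp : p ∈ selfConjugates σ n) :
    p ∈ degreeLT F (n + 1) := by
  rw [mem_degreeLT]
  exact (degree_le_natDegree.trans_lt (WithBot.coe_lt_coe.2 (hp.2.1 ▸ Nat.lt_succ_self n)))

lemma squarefreeSelfConjugates_subset (n : ℕ) :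
    squarefreeSelfConjugates σ n ⊆ selfConjugates σ n :=
  fun _ ⟨hm, _, hn, h0, hp⟩ ↦ ⟨hm, hn, h0, hp⟩

lemma finite_selfConjugates [Finite F] (n : ℕ) : (selfConjugates σ n).Finite :=
  have := Finite.of_equiv _ (degreeLTEquiv F (n + 1)).toEquiv.symm
  (Set.toFinite (degreeLT F (n + 1) : Set F[X])).subset fun _ ↦ mem_degreeLT_of_mem_selfConjugates

noncomputable def selfConjugatesEquivCoeffs (hσ : Involutive σ) (n : ℕ) :
    selfConjugates σ (n + 1) ≃
      {c : Fin (n + 2) → F // c (Fin.last _) = 1 ∧ c ∘ Fin.rev = (c 0 * σ ·) ∘ c} :=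
  (Equiv.subtypeSubtypeEquivSubtype mem_degreeLT_of_mem_selfConjugates).symm.trans <|
    (degreeLTEquiv F (n + 2)).toEquiv.subtypeEquiv fun p ↦ by
      rw [mem_selfConjugates_succ_iff hσ p.2]
      simp [degreeLTEquiv, funext_iff]

def selfConjugateCoeffsEquivSigma (n : ℕ) :
    {c : Fin (n + 2) → F // c (Fin.last _) = 1 ∧ c ∘ Fin.rev = (c 0 * σ ·) ∘ c} ≃
      Σ a : {a : F // a * σ a = 1}, twistedPalindromes (a.1 * σ ·) n where
  toFun c :=
    have h := Fin.comp_rev_eq_comp_iff.1 c.2.2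
    ⟨⟨c.1 0, h.1.symm.trans c.2.1⟩, ⟨Fin.init (Fin.tail c.1), h.2.1⟩⟩
  invFun ad := ⟨Fin.cons ad.1.1 (Fin.snoc ad.2.1 1), by
    refine ⟨by simp, ?_⟩
    rw [Fin.cons_zero]
    exact Fin.cons_snoc_comp_rev_eq_comp_iff.2 ⟨ad.1.2.symm, ad.2.2, by simp⟩⟩
  left_inv c := by
    ext1
    conv_rhs => rw [← Fin.cons_snoc_init_tail c.1, c.2.1]
  right_inv ad := Sigma.ext rfl (heq_of_eq (Subtype.ext (by simp)))

lemma mul_sq_mem_selfConjugates {m k : ℕ} {s g : F[X]} (hs : s ∈ squarefreeSelfConjugates σ m)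
    (hg : g ∈ selfConjugates σ k) : s * g ^ 2 ∈ selfConjugates σ (m + 2 * k) := by
  obtain ⟨hsm, -, hsn, hs0, hsc⟩ := hs
  obtain ⟨hgm, hgn, hg0, hgc⟩ := hg
  refine ⟨hsm.mul (hgm.pow 2), ?_, ?_, by rw [map_mul, map_pow, hsc, hgc]⟩
  · rw [hsm.natDegree_mul (hgm.pow 2), hgm.natDegree_pow, hsn, hgn, mul_comm]
  · simp [mul_coeff_zero, sq, hs0, hg0]

lemma exists_mul_sq_eq_of_mem_selfConjugates (hσ : Involutive σ) {n : ℕ} {φ : F[X]}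
    (hφ : φ ∈ selfConjugates σ n) :
    ∃ s g : F[X], s ∈ squarefreeSelfConjugates σ (n - 2 * g.natDegree) ∧
      g ∈ selfConjugates σ g.natDegree ∧ 2 * g.natDegree ≤ n ∧ s * g ^ 2 = φ := by
  obtain ⟨hm, rfl, h0, hc⟩ := hφ
  obtain ⟨s, g, hsm, hgm, hs, rfl⟩ := hm.exists_squarefree_mul_sq
  have hs0 : s.coeff 0 ≠ 0 := fun h ↦ h0 (by simp [mul_coeff_zero, sq, h])
  have hg0 : g.coeff 0 ≠ 0 := fun h ↦ h0 (by simp [mul_coeff_zero, sq, h])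
  obtain ⟨hsc, hgc⟩ := eq_of_squarefree_mul_sq_eq (squarefree_conjugate hσ hs0 hs) hs
    (monic_conjugate hg0) hgm (by rw [← map_pow, ← map_mul, hc])
  have hdeg : (s * g ^ 2).natDegree = s.natDegree + 2 * g.natDegree := by
    rw [hsm.natDegree_mul (hgm.pow 2), hgm.natDegree_pow, mul_comm]
  exact ⟨s, g, ⟨hsm, hs, by omega, hs0, hsc⟩, ⟨hgm, rfl, hg0, hgc⟩, by omega, rfl⟩

noncomputable def sigmaEquivSelfConjugates (hσ : Involutive σ) (n : ℕ) :
    (Σ k : Fin (n / 2 + 1), squarefreeSelfConjugates σ (n - 2 * k) × selfConjugates σ k) ≃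
      selfConjugates σ n :=
  Equiv.ofBijective
    (fun x ↦ ⟨x.2.1 * x.2.2 ^ 2, by
      have := mul_sq_mem_selfConjugates x.2.1.2 x.2.2.2
      rwa [Nat.sub_add_cancel (by have := x.1.2; omega)] at this⟩)
    ⟨by
      rintro ⟨k₁, ⟨s₁, hs₁⟩, ⟨g₁, hg₁⟩⟩ ⟨k₂, ⟨s₂, hs₂⟩, ⟨g₂, hg₂⟩⟩ h
      obtain ⟨rfl, rfl⟩ :=
        eq_of_squarefree_mul_sq_eq hs₁.2.1 hs₂.2.1 hg₁.1 hg₂.1 (congrArg Subtype.val h)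
      obtain rfl : k₁ = k₂ := Fin.ext (hg₁.2.1.symm.trans hg₂.2.1)
      rfl,
    by
      rintro ⟨φ, hφ⟩
      obtain ⟨s, g, hs, hg, hk, rfl⟩ := exists_mul_sq_eq_of_mem_selfConjugates hσ hφ
      exact ⟨⟨⟨g.natDegree, by omega⟩, ⟨s, hs⟩, ⟨g, hg⟩⟩, rfl⟩⟩

theorem card_selfConjugates_eq_sum [Finite F] (hσ : Involutive σ) (n : ℕ) :
    Nat.card (selfConjugates σ n) = ∑ k ∈ Finset.range (n / 2 + 1),
      Nat.card (squarefreeSelfConjugates σ (n - 2 * k)) * Nat.card (selfConjugates σ k) := by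
  have (k : ℕ) := (finite_selfConjugates (σ := σ) k).to_subtype
  have (k : ℕ) :=
    ((finite_selfConjugates (σ := σ) k).subset (squarefreeSelfConjugates_subset k)).to_subtype
  rw [← Nat.card_congr (sigmaEquivSelfConjugates hσ n), Nat.card_sigma, Finset.sum_range]
  simp only [Nat.card_prod]

lemma selfConjugates_zero : selfConjugates σ 0 = {1} := by
  ext p
  refine ⟨fun ⟨hm, hn, _⟩ ↦ hm.natDegree_eq_zero.1 hn, ?_⟩
  rintro rfl
  exact ⟨monic_one, natDegree_one, by simp, map_one _⟩

lemma squarefreeSelfConjugates_zero : squarefreeSelfConjugates σ 0 = {1} := by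
  ext p
  refine ⟨fun ⟨hm, _, hn, _⟩ ↦ hm.natDegree_eq_zero.1 hn, ?_⟩
  rintro rfl
  exact ⟨monic_one, squarefree_one, natDegree_one, by simp, map_one _⟩

section FiniteField

variable [Fintype F] {q : ℕ} (hF : Fintype.card F = q ^ 2) (hσ : ∀ x, σ x = x ^ q)
include hF hσ

lemma involutive_of_card_eq_sq : Involutive σ := fun x ↦ by
  rw [hσ, hσ, ← pow_mul, ← sq, ← hF, FiniteField.pow_card]

lemma card_twistedPalindromes_mul_frobenius {a : F} (ha : a * σ a = 1) (n : ℕ) :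
    Nat.card (twistedPalindromes (a * σ ·) n) = q ^ n := by
  have hinv : Involutive (a * σ ·) := fun z ↦ by
    dsimp only
    rw [map_mul, involutive_of_card_eq_sq hF hσ, ← mul_assoc, ha, one_mul]
  have hfix : Nat.card (fixedPoints (a * σ ·)) = q := by
    simp_rw [hσ] at ha ⊢
    exact FiniteField.card_fixedPoints_mul_pow hF (by rw [pow_succ', ha])
  rw [card_twistedPalindromes hinv, hfix, Nat.card_eq_fintype_card, hF, ← pow_mul,
    ← pow_add, Nat.div_add_mod]

lemma card_mul_map_self_eq_one : Nat.card {a : F // a * σ a = 1} = q + 1 := by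
  rw [← FiniteField.card_rootsOfUnity_of_card_eq_sq hF,
    Nat.card_congr ((rootsOfUnityEquivNthRoots F (q + 1)).trans
      (Equiv.subtypeEquivRight fun a ↦ ?_))]
  rw [mem_nthRoots (Nat.succ_pos q), hσ, pow_succ']

theorem card_selfConjugates_succ (n : ℕ) :
    Nat.card (selfConjugates σ (n + 1)) = (q + 1) * q ^ n := by
  classical
  have := Fintype.ofFinite {a : F // a * σ a = 1}
  rw [Nat.card_congr ((selfConjugatesEquivCoeffs (involutive_of_card_eq_sq hF hσ) n).trans
    (selfConjugateCoeffsEquivSigma n)), Nat.card_sigma,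
    Finset.sum_congr rfl fun a _ ↦ card_twistedPalindromes_mul_frobenius hF hσ a.2 n,
    Finset.sum_const, Finset.card_univ, ← Nat.card_eq_fintype_card, card_mul_map_self_eq_one hF hσ,
    smul_eq_mul]

theorem card_squarefreeSelfConjugates_add (n : ℕ) :
    (Nat.card (squarefreeSelfConjugates σ (n + 2)) : ℤ) + Nat.card (squarefreeSelfConjugates σ n)
      = Nat.card (selfConjugates σ (n + 2)) - q * Nat.card (selfConjugates σ n) := by
  have hσ' := involutive_of_card_eq_sq hF hσ
  have hM : ∀ k, (Nat.card (selfConjugates σ (k + 2)) : ℤ) =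
      q * Nat.card (selfConjugates σ (k + 1)) := fun k ↦ by
    rw [card_selfConjugates_succ hF hσ, card_selfConjugates_succ hF hσ]
    push_cast
    ring
  have := Finset.sum_range_div_two_succ_sub
    (fun k ↦ (Nat.card (squarefreeSelfConjugates σ k) : ℤ))
    (fun k ↦ (Nat.card (selfConjugates σ k) : ℤ)) hM n
  have h1 : Nat.card (selfConjugates σ 1) = q + 1 := by
    simpa using card_selfConjugates_succ hF hσ 0
  rw [card_selfConjugates_eq_sum hσ' (n + 2), card_selfConjugates_eq_sum hσ' n]
  push_cast
  rw [this, h1, selfConjugates_zero]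
  simp

theorem card_squarefreeSelfConjugates_one : Nat.card (squarefreeSelfConjugates σ 1) = q + 1 := by
  have := card_selfConjugates_eq_sum (involutive_of_card_eq_sq hF hσ) (σ := σ) 1
  simpa [selfConjugates_zero, card_selfConjugates_succ hF hσ 0] using this.symm

theorem card_squarefreeSelfConjugates_two :
    (Nat.card (squarefreeSelfConjugates σ 2) : ℤ) = q ^ 2 - 1 := by
  have := card_squarefreeSelfConjugates_add hF hσ 0
  simp only [card_selfConjugates_succ hF hσ 1, squarefreeSelfConjugates_zero, selfConjugates_zero,
    Nat.card_unique] at this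
  push_cast at this
  linear_combination this

theorem card_squarefreeSelfConjugates_add_succ (n : ℕ) :
    (Nat.card (squarefreeSelfConjugates σ (n + 3)) : ℤ)
        + Nat.card (squarefreeSelfConjugates σ (n + 1))
      = (q + 1) * (q ^ (n + 2) - q ^ (n + 1)) := by
  have := card_squarefreeSelfConjugates_add hF hσ (n + 1)
  rw [card_selfConjugates_succ hF hσ (n + 2), card_selfConjugates_succ hF hσ n] at this
  push_cast at this
  linear_combination this

end FiniteField

end Polynomial

theorem Int.mul_sq_add_one_eq_of_add_eq {q : ℤ} {a : ℕ → ℤ} (h1 : a 1 = q + 1)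
    (h2 : a 2 = q ^ 2 - 1) (h : ∀ n, a (n + 3) + a (n + 1) = (q + 1) * (q ^ (n + 2) - q ^ (n + 1)))
    (n : ℕ) :
    a (n + 1) * (q ^ 2 + 1) = (q + 1) * (q ^ (n + 2) - q ^ (n + 1)
      + (-1) ^ (n + 2) * (-1) ^ ((n + 1) / 2) * (q - (-1) ^ (n + 1))) := by
  induction n using Nat.twoStepInduction with
  | zero => rw [h1]; ring
  | one => rw [h2]; ring
  | more n ih _ =>
    rw [show (n + 2 + 1) / 2 = (n + 1) / 2 + 1 by omega]
    linear_combination (q ^ 2 + 1) * h n - ih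

/-- The number of monic squarefree self-conjugate polynomials of degree `n ≥ 1` over
`F_{q²}` with nonzero constant term (i.e. regular semisimple classes of `U(n,q)`)
equals `(q+1)(q^{n+1} - q^n + (-1)^{n+1}(-1)^{⌊n/2⌋}(q - (-1)^n))/(q² + 1)`.
Here the conjugate of `φ` is `σ(φ(0))⁻¹ · t^{deg φ} φ^σ(1/t)` with `σ : x ↦ x^q`. -/
theorem regular_semisimple_classes_U (q n : ℕ) (hn : 1 ≤ n)
    (F : Type*) [Field F] [Fintype F] (hq : Fintype.card F = q ^ 2)
    (σ : F →+* F) (hσ : ∀ x : F, σ x = x ^ q) :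
    ({p : Polynomial F | p.Monic ∧ Squarefree p ∧ p.natDegree = n ∧ p.coeff 0 ≠ 0 ∧
        Polynomial.C (σ (p.coeff 0))⁻¹ * (p.reverse.map σ) = p}.ncard : ℤ)
      * ((q : ℤ) ^ 2 + 1)
      = ((q : ℤ) + 1) * ((q : ℤ) ^ (n + 1) - (q : ℤ) ^ n
          + (-1) ^ (n + 1) * (-1) ^ (n / 2) * ((q : ℤ) - (-1) ^ n)) := by
  obtain ⟨m, rfl⟩ : ∃ m, n = m + 1 := ⟨n - 1, by omega⟩
  rw [← Nat.card_coe_set_eq]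
  exact Int.mul_sq_add_one_eq_of_add_eq
    (a := fun k ↦ Nat.card (Polynomial.squarefreeSelfConjugates σ k))
    (by exact_mod_cast Polynomial.card_squarefreeSelfConjugates_one hq hσ)
    (Polynomial.card_squarefreeSelfConjugates_two hq hσ)
    (Polynomial.card_squarefreeSelfConjugates_add_succ hq hσ) m
end

section
/- For all n ≥ 0 and any q, the coefficient of u^n in the formal power series (1-qu^2)/((1+u)^2(1-qu)) equals (-1)^n(n+1) + Σ_{i=0}^{n-1} (-1)^i (2i+1) q^{n-i}. -/
/-!
Write `A = Σ (-1)ⁿ (n+1) uⁿ = 1/(1+u)²` and `G = Σ qⁿ uⁿ = 1/(1-qu)`. Since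
`(1 - qu²) - (1 - qu) = qu(1 - u)` and `qu G = G - 1`, the series equals `A + A(1-u)(G-1)`.
The first summand gives `(-1)ⁿ(n+1)`; `A(1-u)` has coefficients `(-1)ⁱ(2i+1)`, and multiplying
by `G - 1` takes their partial sums weighted by `q^(n-i)` over `i < n`.
-/

open PowerSeries

namespace PowerSeries

variable {R : Type*} [CommRing R]

theorem rescale_neg_one_mk_one_sq :
    rescale (-1 : R) (mk 1 ^ 2) = mk fun n => (-1) ^ n * (n + 1 : R) := by
  ext n
  rw [mk_one_pow_eq_mk_choose_add R 1]
  simp [coeff_rescale, add_comm]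

theorem mk_neg_one_pow_mul_succ_mul_one_add_X_sq :
    (mk fun n => (-1) ^ n * (n + 1 : R)) * (1 + X) ^ 2 = 1 :=
  calc (mk fun n => (-1) ^ n * (n + 1 : R)) * (1 + X) ^ 2
      = rescale (-1 : R) (mk 1 ^ 2 * (1 - X) ^ 2) := by
        rw [map_mul, rescale_neg_one_mk_one_sq, map_pow, map_sub, map_one, rescale_neg_one_X,
          sub_neg_eq_add]
    _ = 1 := by rw [← mul_pow, mk_one_mul_one_sub_eq_one, one_pow, map_one]

theorem mk_neg_one_pow_mul_two_mul_add_one_eq :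
    (mk fun n => (-1) ^ n * (2 * n + 1 : R)) = (mk fun n => (-1) ^ n * (n + 1 : R)) * (1 - X) := by
  ext n
  cases n with
  | zero => simp
  | succ n =>
    simp only [coeff_mk, pow_succ, Nat.cast_add, Nat.cast_one, mul_sub, mul_one, map_sub,
      coeff_succ_mul_X]
    ring

theorem rescale_mk_one_mul_one_sub_C_mul_X (a : R) : rescale a (mk 1) * (1 - C a * X) = 1 := by
  simpa using congrArg (rescale a) (mk_one_mul_one_sub_eq_one R)

theorem coeff_mul_rescale_mk_one (f : R⟦X⟧) (a : R) (n : ℕ) :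
    coeff n (f * rescale a (mk 1)) = ∑ i ∈ Finset.range (n + 1), coeff i f * a ^ (n - i) := by
  rw [coeff_mul, Finset.Nat.sum_antidiagonal_eq_sum_range_succ
    (fun i j => coeff i f * coeff j (rescale a (mk 1)))]
  simp [coeff_rescale]

end PowerSeries

/-- The coefficient of `u^n` in `(1-qu²)/((1+u)²(1-qu))` equals
`(-1)^n (n+1) + Σ_{i=0}^{n-1} (-1)^i (2i+1) q^{n-i}`. -/
theorem coeff_symplectic_series (q : ℚ) (n : ℕ) :
    (PowerSeries.coeff (R := ℚ) n)
      ((1 - PowerSeries.C (R := ℚ) q * X ^ 2) *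
        ((1 + X) ^ 2 * (1 - PowerSeries.C (R := ℚ) q * X))⁻¹) =
    (-1) ^ n * ((n : ℚ) + 1) +
      ∑ i ∈ Finset.range n, (-1) ^ i * (2 * (i : ℚ) + 1) * q ^ (n - i) := by
  set A : ℚ⟦X⟧ := mk fun n => (-1) ^ n * (n + 1 : ℚ)
  have hdecomp : (1 - C q * X ^ 2) * ((1 + X) ^ 2 * (1 - C q * X))⁻¹
      = A + A * (1 - X) * (rescale q (mk 1) - 1) := by
    refine ((eq_mul_inv_iff_mul_eq (by simp)).2 ?_).symm
    linear_combination
      (1 - C q * X) * (1 + (1 - X) * (rescale q (mk 1) - 1)) *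
          mk_neg_one_pow_mul_succ_mul_one_add_X_sq (R := ℚ) +
        (1 - X) * rescale_mk_one_mul_one_sub_C_mul_X q
  rw [hdecomp, ← mk_neg_one_pow_mul_two_mul_add_one_eq, mul_sub, mul_one, map_add, map_sub,
    coeff_mul_rescale_mk_one, Finset.sum_range_succ]
  simp [A]
end
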